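/- arXiv:2512.13289 — 8 statements merged into one kernel-verified Lean document; each statement's English description precedes it below -/
import Mathlib

section
/- Let n ≥ 1 and let f be a polynomial of degree n with real coefficients. Then the maximum of |f| over [-1,1] is at most 14 times the maximum of |f| over the finite set N = {cos(π(k-1)/(2n)) : 1 ≤ k ≤ 2n+1}. -/
/-!
Put `tₖ = 2πk/(4n)` and let `V = 2F₂ₙ - Fₙ` be the de la Vallée Poussin kernel, where
`F_M = |D_M|²/M` is the Fejér kernel of the Dirichlet sum `D_M(ψ) = ∑_{l<M} e^{ilψ}`. The Fourier
coefficients of `V` equal `1` for `|j| ≤ n`, so by discrete orthogonality of characters at the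
nodes `tₖ`, `∑ₖ g(tₖ) V(θ - tₖ) = 4n g(θ)` for every trigonometric polynomial `g` of degree `≤ n`,
in particular for `g(θ) = f(cos θ)`. As `F_M ≥ 0` has discrete mean `1`, `∑ₖ |V(θ - tₖ)| ≤ 3 · 4n`,
whence `|f(cos θ)| ≤ 3 maxₖ |f(cos tₖ)|`; since `cos(2π - t) = cos t`, the nodes `tₖ` with
`k ≤ 2n` suffice, and their cosines are the points of `N`.
-/

open Complex Finset
open scoped Real ComplexConjugate

noncomputable def expI (j : ℤ) (x : ℝ) : ℂ := exp (j * x * I)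

lemma expI_add (a b : ℤ) (x : ℝ) : expI (a + b) x = expI a x * expI b x := by
  simp only [expI, ← Complex.exp_add]
  push_cast
  ring_nf

lemma expI_sub (j : ℤ) (x y : ℝ) : expI j (x - y) = expI j x * expI (-j) y := by
  simp only [expI, ← Complex.exp_add]
  push_cast
  ring_nf

lemma expI_pow (j : ℤ) (p : ℕ) (x : ℝ) : expI j x ^ p = expI (p * j) x := by
  rw [expI, expI, ← Complex.exp_nat_mul]
  push_cast
  ring_nf

@[simp]
lemma expI_zero (x : ℝ) : expI 0 x = 1 := by simp [expI]

lemma conj_expI (j : ℤ) (x : ℝ) : conj (expI j x) = expI (-j) x := by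
  rw [expI, expI, ← Complex.exp_conj]
  simp only [map_mul, conj_I, map_intCast, Complex.conj_ofReal]
  push_cast
  ring_nf

noncomputable def node (N k : ℕ) : ℝ := 2 * π * k / N

lemma sum_expI_node {N : ℕ} (hN : N ≠ 0) (j : ℤ) :
    ∑ k ∈ range N, expI j (node N k) = if (N : ℤ) ∣ j then (N : ℂ) else 0 := by
  have hζ := Complex.isPrimitiveRoot_exp N hN
  have hw : ∀ k : ℕ, expI j (node N k) = (exp (2 * π * I / N) ^ j) ^ k := fun k => by
    rw [← Complex.exp_int_mul, ← Complex.exp_nat_mul, expI, node]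
    push_cast
    ring_nf
  simp only [hw]
  generalize exp (2 * π * I / N) = ζ at hζ ⊢
  split_ifs with hdvd
  · simp [(hζ.zpow_eq_one_iff_dvd j).mpr hdvd]
  · have hwN : (ζ ^ j) ^ N = 1 := by
      rw [← zpow_natCast, ← zpow_mul, mul_comm, zpow_mul, zpow_natCast, hζ.pow_eq_one, one_zpow]
    rw [geom_sum_eq (mt (hζ.zpow_eq_one_iff_dvd j).mp hdvd), hwN, sub_self, zero_div]

lemma sum_expI_node_mul_expI_sub {N : ℕ} (hN : N ≠ 0) {j l : ℤ} (hjl : |j - l| < N) (θ : ℝ) :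
    ∑ k ∈ range N, expI j (node N k) * expI l (θ - node N k)
      = if l = j then N * expI j θ else 0 := by
  have hsplit : ∀ k, expI j (node N k) * expI l (θ - node N k)
      = expI l θ * expI (j - l) (node N k) := fun k => by
    rw [expI_sub, sub_eq_add_neg j, expI_add]; ring
  rw [sum_congr rfl fun k _ => hsplit k, ← mul_sum, sum_expI_node hN]
  have hiff : (N : ℤ) ∣ j - l ↔ l = j :=
    ⟨fun h => (sub_eq_zero.mp (Int.eq_zero_of_abs_lt_dvd h hjl)).symm,
      fun h => by simp [h]⟩
  split_ifs with h1 h2 h2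
  · rw [h2]; ring
  · exact absurd (hiff.mp h1) h2
  · exact absurd (hiff.mpr ‹_›) h1
  · simp

lemma card_filter_sub_eq (M : ℕ) (j : ℤ) :
    #{p ∈ range M ×ˢ range M | (p.1 : ℤ) - p.2 = j} = M - j.natAbs := by
  rw [← card_range (M - j.natAbs)]
  refine card_bij' (fun p _ => p.2 - (-j).toNat) (fun i _ => (i + j.toNat, i + (-j).toNat))
    ?_ ?_ ?_ ?_
  · intro p hp
    simp only [mem_filter, mem_product, mem_range] at hp ⊢
    omega
  · intro i hi
    simp only [mem_filter, mem_product, mem_range] at hi ⊢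
    omega
  · intro p hp
    simp only [mem_filter, mem_product, mem_range] at hp
    ext <;> simp <;> omega
  · intro i hi
    simp only [mem_range] at hi
    omega

noncomputable def dirichlet (M : ℕ) (ψ : ℝ) : ℂ := ∑ l ∈ range M, expI l ψ

lemma normSq_dirichlet (M : ℕ) (ψ : ℝ) :
    (normSq (dirichlet M ψ) : ℂ) = ∑ l ∈ range M, ∑ l' ∈ range M, expI (l - l') ψ := by
  rw [← mul_conj, dirichlet, map_sum, sum_mul_sum]
  simp only [conj_expI, ← expI_add, sub_eq_add_neg]

lemma sum_expI_node_mul_normSq_dirichlet {N M : ℕ} {j : ℤ} (hjM : j.natAbs + M ≤ N) (θ : ℝ) :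
    ∑ k ∈ range N, expI j (node N k) * normSq (dirichlet M (θ - node N k))
      = N * (M - j.natAbs : ℕ) * expI j θ := by
  rcases Nat.eq_zero_or_pos N with rfl | hN
  · simp
  calc ∑ k ∈ range N, expI j (node N k) * normSq (dirichlet M (θ - node N k))
      = ∑ l ∈ range M, ∑ l' ∈ range M,
          ∑ k ∈ range N, expI j (node N k) * expI ((l : ℤ) - l') (θ - node N k) := by
        simp only [normSq_dirichlet, mul_sum]
        rw [sum_comm]
        exact sum_congr rfl fun _ _ => sum_comm
    _ = ∑ l ∈ range M, ∑ l' ∈ range M,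
          if (l : ℤ) - l' = j then (N * expI j θ) else 0 := by
        refine sum_congr rfl fun l hl => sum_congr rfl fun l' hl' => ?_
        simp only [mem_range] at hl hl'
        exact sum_expI_node_mul_expI_sub hN.ne' (by rw [abs_lt]; omega) θ
    _ = N * (M - j.natAbs : ℕ) * expI j θ := by
        rw [← sum_product', sum_ite, sum_const_zero, add_zero, sum_const, card_filter_sub_eq,
          nsmul_eq_mul]
        ring

lemma sum_normSq_dirichlet {N M : ℕ} (hM : M ≤ N) (θ : ℝ) :
    ∑ k ∈ range N, normSq (dirichlet M (θ - node N k)) = N * M := by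
  have h := sum_expI_node_mul_normSq_dirichlet (j := 0) (by simpa using hM) θ
  simp only [expI_zero, one_mul, mul_one, Int.natAbs_zero, Nat.sub_zero] at h
  exact_mod_cast h

noncomputable def vallePoussin (n : ℕ) (ψ : ℝ) : ℝ :=
  (normSq (dirichlet (2 * n) ψ) - normSq (dirichlet n ψ)) / n

lemma sum_abs_vallePoussin_le {n : ℕ} (hn : 0 < n) (θ : ℝ) :
    ∑ k ∈ range (4 * n), |vallePoussin n (θ - node (4 * n) k)| ≤ 3 * (4 * n : ℕ) := by
  have hbound : ∀ ψ, |vallePoussin n ψ|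
      ≤ (normSq (dirichlet (2 * n) ψ) + normSq (dirichlet n ψ)) / n := fun ψ => by
    rw [vallePoussin, abs_div, Nat.abs_cast]
    gcongr
    have := normSq_nonneg (dirichlet (2 * n) ψ)
    have := normSq_nonneg (dirichlet n ψ)
    rw [abs_le]
    constructor <;> linarith
  calc ∑ k ∈ range (4 * n), |vallePoussin n (θ - node (4 * n) k)|
      ≤ ∑ k ∈ range (4 * n), (normSq (dirichlet (2 * n) (θ - node (4 * n) k))
          + normSq (dirichlet n (θ - node (4 * n) k))) / n :=
        sum_le_sum fun k _ => hbound _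
    _ = 3 * (4 * n : ℕ) := by
        rw [← sum_div, sum_add_distrib, sum_normSq_dirichlet (by omega),
          sum_normSq_dirichlet (by omega)]
        field_simp
        push_cast
        ring

def reproducedBy (N : ℕ) (K : ℝ → ℂ) : Submodule ℂ (ℝ → ℂ) where
  carrier := {g | ∀ θ, ∑ k ∈ range N, g (node N k) * K (θ - node N k) = N * g θ}
  add_mem' {f g} hf hg θ := by
    simp only [Pi.add_apply, add_mul, sum_add_distrib, hf θ, hg θ, mul_add]
  zero_mem' θ := by simp
  smul_mem' c g hg θ := by
    simp only [Pi.smul_apply, smul_eq_mul, mul_assoc, ← mul_sum, hg θ]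
    ring

lemma expI_mem_reproducedBy_vallePoussin {n : ℕ} (hn : 0 < n) {j : ℤ} (hj : j.natAbs ≤ n) :
    expI j ∈ reproducedBy (4 * n) (fun ψ => vallePoussin n ψ) := fun θ => by
  have h2n := sum_expI_node_mul_normSq_dirichlet (N := 4 * n) (M := 2 * n) (j := j) (by omega) θ
  have hn' := sum_expI_node_mul_normSq_dirichlet (N := 4 * n) (M := n) (j := j) (by omega) θ
  have hn0 : (n : ℂ) ≠ 0 := by exact_mod_cast hn.ne'
  simp only [vallePoussin, ofReal_div, ofReal_sub, ofReal_natCast, mul_div_assoc', mul_sub,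
    ← sum_div, sum_sub_distrib, h2n, hn', Nat.cast_sub (by omega : j.natAbs ≤ 2 * n),
    Nat.cast_sub hj]
  field_simp
  push_cast
  ring

lemma cos_pow_eq_sum_expI (m : ℕ) :
    (fun x : ℝ => (Real.cos x : ℂ) ^ m)
      = ∑ l ∈ range (m + 1), (((2 : ℂ) ^ m)⁻¹ * m.choose l) • expI (2 * l - m) := by
  ext x
  have hcos : (Real.cos x : ℂ) = (expI 1 x + expI (-1) x) / 2 := by
    rw [ofReal_cos, Complex.cos, expI, expI]
    push_cast
    ring_nf
  rw [hcos, div_pow, add_pow, Finset.sum_apply, div_eq_inv_mul, mul_sum]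
  refine sum_congr rfl fun l hl => ?_
  have hl : l ≤ m := Nat.lt_succ_iff.mp (mem_range.mp hl)
  rw [Pi.smul_apply, smul_eq_mul, expI_pow, expI_pow, ← expI_add,
    show (l : ℤ) * 1 + ((m - l : ℕ) : ℤ) * -1 = 2 * l - m by push_cast [Nat.cast_sub hl]; ring]
  ring



lemma eval_cos_mem_reproducedBy_vallePoussin {n : ℕ} (hn : 0 < n) {p : Polynomial ℝ}
    (hp : p.natDegree ≤ n) :
    (fun x => ((p.eval (Real.cos x) : ℝ) : ℂ)) ∈ reproducedBy (4 * n) (fun ψ => vallePoussin n ψ) := by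
  have hcos_pow : ∀ m ≤ n,
      (fun x : ℝ => (Real.cos x : ℂ) ^ m) ∈ reproducedBy (4 * n) (fun ψ => vallePoussin n ψ) :=
    fun m hm => by
      rw [cos_pow_eq_sum_expI]
      exact Submodule.sum_mem _ fun l hl => Submodule.smul_mem _ _ <|
        expI_mem_reproducedBy_vallePoussin hn (by simp only [mem_range] at hl; omega)
  have hp_eq : (fun x => ((p.eval (Real.cos x) : ℝ) : ℂ))
      = ∑ m ∈ range (n + 1), (p.coeff m : ℂ) • fun x : ℝ => (Real.cos x : ℂ) ^ m := by
    ext x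
    rw [Polynomial.eval_eq_sum_range' (Nat.lt_succ_of_le hp), Finset.sum_apply]
    push_cast
    rfl
  rw [hp_eq]
  exact Submodule.sum_mem _ fun m hm =>
    Submodule.smul_mem _ _ (hcos_pow m (Nat.lt_succ_iff.mp (mem_range.mp hm)))

lemma norm_le_of_mem_reproducedBy {N : ℕ} {K g : ℝ → ℂ} (hg : g ∈ reproducedBy N K) (hN : 0 < N)
    {S C θ : ℝ} (hS : ∀ k < N, ‖g (node N k)‖ ≤ S)
    (hK : ∑ k ∈ range N, ‖K (θ - node N k)‖ ≤ C * N) : ‖g θ‖ ≤ C * S := by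
  have hS0 : 0 ≤ S := (norm_nonneg _).trans (hS 0 hN)
  have hmain : N * ‖g θ‖ ≤ N * (C * S) := calc
    N * ‖g θ‖ = ‖∑ k ∈ range N, g (node N k) * K (θ - node N k)‖ := by simp [hg θ]
    _ ≤ ∑ k ∈ range N, S * ‖K (θ - node N k)‖ := by
        refine (norm_sum_le _ _).trans (sum_le_sum fun k hk => ?_)
        rw [norm_mul]
        exact mul_le_mul_of_nonneg_right (hS k (mem_range.mp hk)) (norm_nonneg _)
    _ ≤ N * (C * S) := by
        rw [← mul_sum]
        nlinarith
  exact le_of_mul_le_mul_left hmain (by exact_mod_cast hN)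


lemma cos_node_sub {N k : ℕ} (hk : k ≤ N) : Real.cos (node N (N - k)) = Real.cos (node N k) := by
  rcases Nat.eq_zero_or_pos N with rfl | hN
  · simp [node]
  have : node N (N - k) = 2 * π - node N k := by
    rw [node, node, Nat.cast_sub hk]
    field_simp
  rw [this, Real.cos_two_pi_sub]

lemma le_sup'_of_cos_node {n : ℕ} (g : ℝ → ℝ) (h : (Icc 1 (2 * n + 1)).Nonempty) {k : ℕ}
    (hk : k < 4 * n) :
    g (Real.cos (node (4 * n) k))
      ≤ (Icc 1 (2 * n + 1)).sup' h (fun i => g (Real.cos (π * ((i : ℝ) - 1) / (2 * n)))) := by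
  obtain ⟨i, hi, hcos⟩ : ∃ i ≤ 2 * n, Real.cos (node (4 * n) k) = Real.cos (node (4 * n) i) := by
    rcases le_or_gt k (2 * n) with hk' | hk'
    · exact ⟨k, hk', rfl⟩
    · exact ⟨4 * n - k, by omega, (cos_node_sub hk.le).symm⟩
  refine le_sup'_of_le _ (b := i + 1) (by simp; omega) (le_of_eq ?_)
  rw [hcos, node]
  congr 2
  push_cast
  ring

/-- Lemma 5.3 of Lacoin–Paquette type: for a real polynomial `f` of
degree `n ≥ 1`, the maximum of `|f|` on `[-1,1]` is at most `14` times the maximum of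
`|f|` over the Chebyshev-type net `{cos (π (k-1) / (2n)) : 1 ≤ k ≤ 2n+1}`. -/
theorem stmt_0 (n : ℕ) (hn : 1 ≤ n) (f : Polynomial ℝ) (hdeg : f.degree = n) :
    ∀ x ∈ Set.Icc (-1 : ℝ) 1,
      |f.eval x| ≤ 14 * (Finset.Icc 1 (2 * n + 1)).sup'
        (Finset.nonempty_Icc.mpr (by omega))
        (fun k => |f.eval (Real.cos (Real.pi * ((k : ℝ) - 1) / (2 * n)))|) := by
  intro x ⟨hx₁, hx₂⟩
  set S := (Finset.Icc 1 (2 * n + 1)).sup' (Finset.nonempty_Icc.mpr (by omega))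
    (fun k => |f.eval (Real.cos (Real.pi * ((k : ℝ) - 1) / (2 * n)))|)
  have hmem := eval_cos_mem_reproducedBy_vallePoussin hn (Polynomial.natDegree_le_of_degree_le hdeg.le)
  have hbound := norm_le_of_mem_reproducedBy hmem (by omega) (S := S) (C := 3)
    (fun k hk => by
      rw [Complex.norm_real, Real.norm_eq_abs]
      exact le_sup'_of_cos_node (fun y => |f.eval y|) _ hk)
    (by simpa using sum_abs_vallePoussin_le hn (Real.arccos x))
  have hS : 0 ≤ S :=
    (abs_nonneg _).trans (le_sup'_of_cos_node (fun y => |f.eval y|) _ (by omega : 0 < 4 * n))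
  rw [Complex.norm_real, Real.norm_eq_abs, Real.cos_arccos hx₁ hx₂] at hbound
  linarith
end

section
/- Let z ∈ ℝ with |z| ≥ 2 and set α = (|z| + √(z² - 4))/2. Then the matrix A with rows (z, -1), (1, 0) satisfies P⁻¹ A P = sign(z)·diag(α, α⁻¹), where P is the matrix with rows (1, sign(z)α⁻¹), (sign(z)α⁻¹, 1). -/
/-- for `|z| > 2`, with `α = (|z| + √(z²-4))/2`, `s = sign z`, the matrix
`A = [[z,-1],[1,0]]` is diagonalized by `P = [[1, s α⁻¹],[s α⁻¹, 1]]`: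
`P⁻¹ A P = s • diag(α, α⁻¹)`. -/
theorem stmt_2 (z : ℝ) (hz : 2 < |z|) :
    (!![(1 : ℝ), Real.sign z * ((|z| + Real.sqrt (z ^ 2 - 4)) / 2)⁻¹;
        Real.sign z * ((|z| + Real.sqrt (z ^ 2 - 4)) / 2)⁻¹, 1])⁻¹
      * !![z, -1; 1, 0]
      * !![(1 : ℝ), Real.sign z * ((|z| + Real.sqrt (z ^ 2 - 4)) / 2)⁻¹;
        Real.sign z * ((|z| + Real.sqrt (z ^ 2 - 4)) / 2)⁻¹, 1]
    = Real.sign z •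
        !![(|z| + Real.sqrt (z ^ 2 - 4)) / 2, 0;
           0, ((|z| + Real.sqrt (z ^ 2 - 4)) / 2)⁻¹] := by
  have hzz : (0:ℝ) ≤ z ^ 2 - 4 := by nlinarith [sq_abs z]
  set r := Real.sqrt (z ^ 2 - 4) with hr
  have hr0 : 0 ≤ r := Real.sqrt_nonneg _
  have hr2 : r ^ 2 = z ^ 2 - 4 := Real.sq_sqrt hzz
  set α := (|z| + r) / 2 with hα
  have hα1 : 1 < α := by
    have : 2 < |z| + r := by linarith
    simp only [hα]; linarith
  have hα0 : α ≠ 0 := by linarith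
  have hinv : α⁻¹ = |z| - α := by
    have h : α * (|z| - α) = 1 := by
      simp only [hα]; nlinarith [sq_abs z]
    field_simp
    linarith [h]
  have hai : α * α⁻¹ = 1 := mul_inv_cancel₀ hα0
  have hb0 : 0 < α⁻¹ := by positivity
  have hb1 : α⁻¹ < 1 := by rw [inv_lt_one_iff₀]; right; exact hα1
  have hz0 : z ≠ 0 := by intro h; rw [h] at hz; simp at hz; linarith
  set s := Real.sign z with hs
  have hsz : s * z = |z| := by
    rcases lt_or_gt_of_ne hz0 with h | h
    · rw [hs, Real.sign_of_neg h, abs_of_neg h]; ring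
    · rw [hs, Real.sign_of_pos h, abs_of_pos h]; ring
  have hs2 : s * s = 1 := by
    rcases lt_or_gt_of_ne hz0 with h | h
    · rw [hs, Real.sign_of_neg h]; norm_num
    · rw [hs, Real.sign_of_pos h]; norm_num
  obtain ⟨b, hb⟩ : ∃ b, α⁻¹ = b := ⟨_, rfl⟩
  rw [hb] at hinv hai hb0 hb1 ⊢
  clear hb
  set m := |z| with hm
  clear_value α s m
  clear hα hs hm hr hr2 hr0 hzz
  set P : Matrix (Fin 2) (Fin 2) ℝ := !![(1:ℝ), s * b; s * b, 1] with hP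
  have hdet : IsUnit P.det := by
    rw [hP, Matrix.det_fin_two_of]
    have h1 : s * b * (s * b) = b * b := by nlinarith [hs2]
    rw [isUnit_iff_ne_zero]
    nlinarith
  haveI := P.invertibleOfIsUnitDet hdet
  rw [mul_assoc, Matrix.inv_mul_eq_iff_eq_mul_of_invertible]
  ext i j
  fin_cases i <;> fin_cases j <;>
    simp [hP, Matrix.mul_apply, Fin.sum_univ_two, Matrix.smul_apply]
  · linear_combination (-s) * hinv + s * hsz - z * hs2
  · linear_combination b * hsz - b * hinv + hai - b * b * hs2
  · linear_combination (-α * b) * hs2 - hai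
end

section
/- Let X be a real random variable with 𝔼X = 0, and suppose X is bounded: |X| ≤ a almost surely, with 𝔼X² > 0. Define the Sakhanenko parameter λ(X) = sup{λ > 0 : λ·𝔼[|X|³ e^{λ|X|}] ≤ 𝔼X²}. Then √(Var X) ≤ λ(X)⁻¹ ≤ 2a. -/
open MeasureTheory

/-! Both bounds come from comparing the defining inequality with `𝔼X²`.
Since `t ≤ eᵗ`, every admissible `λ` satisfies `λ² 𝔼X⁴ ≤ λ 𝔼[|X|³ e^{λ|X|}] ≤ 𝔼X²`, and
`(𝔼X²)² ≤ 𝔼X⁴` then gives `λ² 𝔼X² ≤ 1`, i.e. `λ ≤ (√𝔼X²)⁻¹`. Conversely `λ = 1/(2a)` is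
admissible, because `|X|³ ≤ a X²` and `e^{|X|/(2a)} ≤ e^{1/2} ≤ 2`. -/

/-- The Sakhanenko parameter `λ(X) = sup {λ > 0 : λ 𝔼[|X|³ e^{λ|X|}] ≤ 𝔼 X²}`. -/
noncomputable def sakhanenkoParam {Ω : Type*} [MeasurableSpace Ω] (μ : Measure Ω)
    (X : Ω → ℝ) : ℝ :=
  sSup {l : ℝ | 0 < l ∧
    l * ∫ ω, |X ω| ^ 3 * Real.exp (l * |X ω|) ∂μ ≤ ∫ ω, (X ω) ^ 2 ∂μ}

lemma Real.exp_half_le_two : Real.exp (1 / 2) ≤ 2 := by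
  have hsq : Real.exp (1 / 2) ^ 2 = Real.exp 1 := by
    rw [← Real.exp_nat_mul]; norm_num
  nlinarith [Real.exp_one_lt_d9, Real.exp_pos (1 / 2)]

lemma mul_pow_four_le_abs_pow_three_mul_exp (l x : ℝ) :
    l * x ^ 4 ≤ |x| ^ 3 * Real.exp (l * |x|) := by
  calc l * x ^ 4 = |x| ^ 3 * (l * |x|) := by rw [← Even.pow_abs ⟨2, rfl⟩]; ring
    _ ≤ |x| ^ 3 * Real.exp (l * |x|) := by
      gcongr; linarith [Real.add_one_le_exp (l * |x|)]

lemma abs_pow_three_mul_exp_le {a x : ℝ} (ha : 0 < a) (hx : |x| ≤ a) :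
    |x| ^ 3 * Real.exp (1 / (2 * a) * |x|) ≤ 2 * a * x ^ 2 := by
  have hcube : |x| ^ 3 ≤ a * x ^ 2 := calc
    |x| ^ 3 = |x| * x ^ 2 := by rw [← sq_abs x]; ring
    _ ≤ a * x ^ 2 := by gcongr
  have hexp : Real.exp (1 / (2 * a) * |x|) ≤ 2 := by
    refine (Real.exp_le_exp.2 ?_).trans Real.exp_half_le_two
    rw [one_div, inv_mul_le_iff₀ (by positivity)]
    linarith
  calc |x| ^ 3 * Real.exp (1 / (2 * a) * |x|) ≤ a * x ^ 2 * 2 := by gcongr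
    _ = 2 * a * x ^ 2 := by ring

lemma sq_integral_le_integral_sq {Ω : Type*} [MeasurableSpace Ω] {μ : Measure Ω}
    [IsProbabilityMeasure μ] {Y : Ω → ℝ} (hY : MemLp Y 2 μ) :
    (∫ ω, Y ω ∂μ) ^ 2 ≤ ∫ ω, Y ω ^ 2 ∂μ := by
  have h := ProbabilityTheory.variance_nonneg Y μ
  rw [ProbabilityTheory.variance_eq_sub hY] at h
  simpa using h

section BoundedRandomVariable

variable {Ω : Type*} [MeasurableSpace Ω] {μ : Measure Ω} {X : Ω → ℝ} {a : ℝ}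

lemma integrable_comp_of_ae_abs_le [IsFiniteMeasure μ] (hX : AEStronglyMeasurable X μ)
    (hbdd : ∀ᵐ ω ∂μ, |X ω| ≤ a) {g : ℝ → ℝ} (hg : Continuous g) :
    Integrable (fun ω => g (X ω)) μ := by
  obtain ⟨C, hC⟩ := (isCompact_Icc (a := -a) (b := a)).exists_bound_of_continuousOn
    hg.continuousOn
  refine Integrable.of_bound (hg.comp_aestronglyMeasurable hX) C ?_
  filter_upwards [hbdd] with ω hω
  exact hC _ (abs_le.1 hω)

lemma sq_integral_sq_le_integral_pow_four [IsProbabilityMeasure μ]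
    (hX : AEStronglyMeasurable X μ) (hbdd : ∀ᵐ ω ∂μ, |X ω| ≤ a) :
    (∫ ω, X ω ^ 2 ∂μ) ^ 2 ≤ ∫ ω, X ω ^ 4 ∂μ := by
  have hX2 : MemLp (fun ω => X ω ^ 2) 2 μ := by
    refine MemLp.of_bound (by fun_prop) (a ^ 2) ?_
    filter_upwards [hbdd] with ω hω
    rw [Real.norm_eq_abs, abs_pow]
    exact pow_le_pow_left₀ (abs_nonneg _) hω 2
  simpa only [← pow_mul] using sq_integral_le_integral_sq hX2

lemma le_inv_sqrt_of_mul_integral_le [IsProbabilityMeasure μ]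
    (hX : AEStronglyMeasurable X μ) (hbdd : ∀ᵐ ω ∂μ, |X ω| ≤ a)
    (hvar : 0 < ∫ ω, X ω ^ 2 ∂μ) {l : ℝ} (hl : 0 < l)
    (hadm : l * ∫ ω, |X ω| ^ 3 * Real.exp (l * |X ω|) ∂μ ≤ ∫ ω, X ω ^ 2 ∂μ) :
    l ≤ (Real.sqrt (∫ ω, X ω ^ 2 ∂μ))⁻¹ := by
  set V := ∫ ω, X ω ^ 2 ∂μ
  have hfourth : l * ∫ ω, X ω ^ 4 ∂μ ≤ ∫ ω, |X ω| ^ 3 * Real.exp (l * |X ω|) ∂μ := by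
    rw [← integral_const_mul]
    exact integral_mono
      (integrable_comp_of_ae_abs_le hX hbdd (g := fun x => l * x ^ 4) (by fun_prop))
      (integrable_comp_of_ae_abs_le hX hbdd (g := fun x => |x| ^ 3 * Real.exp (l * |x|))
        (by fun_prop))
      fun ω => mul_pow_four_le_abs_pow_three_mul_exp l (X ω)
  have hsq : l ^ 2 * V ^ 2 ≤ V := calc
    l ^ 2 * V ^ 2 ≤ l * (l * ∫ ω, X ω ^ 4 ∂μ) := by
      rw [← mul_assoc, ← sq]
      gcongr
      exact sq_integral_sq_le_integral_pow_four hX hbdd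
    _ ≤ V := (mul_le_mul_of_nonneg_left hfourth hl.le).trans hadm
  have hlV : (l * Real.sqrt V) ^ 2 ≤ 1 := by
    rw [mul_pow, Real.sq_sqrt hvar.le]
    nlinarith
  rw [← one_div, le_div_iff₀ (Real.sqrt_pos.2 hvar)]
  exact (pow_le_one_iff_of_nonneg (by positivity) two_ne_zero).1 hlV

lemma inv_two_mul_mul_integral_le [IsFiniteMeasure μ] (hX : AEStronglyMeasurable X μ)
    (ha : 0 < a) (hbdd : ∀ᵐ ω ∂μ, |X ω| ≤ a) :
    1 / (2 * a) * ∫ ω, |X ω| ^ 3 * Real.exp (1 / (2 * a) * |X ω|) ∂μ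
      ≤ ∫ ω, X ω ^ 2 ∂μ := by
  have hle : ∫ ω, |X ω| ^ 3 * Real.exp (1 / (2 * a) * |X ω|) ∂μ
      ≤ ∫ ω, 2 * a * X ω ^ 2 ∂μ := by
    refine integral_mono_ae (integrable_comp_of_ae_abs_le hX hbdd
      (g := fun x => |x| ^ 3 * Real.exp (1 / (2 * a) * |x|)) (by fun_prop))
      (integrable_comp_of_ae_abs_le hX hbdd (g := fun x => 2 * a * x ^ 2) (by fun_prop)) ?_
    filter_upwards [hbdd] with ω hω
    exact abs_pow_three_mul_exp_le ha hω
  calc 1 / (2 * a) * ∫ ω, |X ω| ^ 3 * Real.exp (1 / (2 * a) * |X ω|) ∂μ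
      ≤ 1 / (2 * a) * ∫ ω, 2 * a * X ω ^ 2 ∂μ := by gcongr
    _ = ∫ ω, X ω ^ 2 ∂μ := by rw [integral_const_mul]; field_simp

lemma inv_two_mul_le_sakhanenkoParam [IsProbabilityMeasure μ]
    (hX : AEStronglyMeasurable X μ) (ha : 0 < a) (hbdd : ∀ᵐ ω ∂μ, |X ω| ≤ a)
    (hvar : 0 < ∫ ω, X ω ^ 2 ∂μ) :
    1 / (2 * a) ≤ sakhanenkoParam μ X :=
  le_csSup ⟨_, fun _ hl => le_inv_sqrt_of_mul_integral_le hX hbdd hvar hl.1 hl.2⟩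
    ⟨by positivity, inv_two_mul_mul_integral_le hX ha hbdd⟩

lemma sakhanenkoParam_le_inv_sqrt [IsProbabilityMeasure μ]
    (hX : AEStronglyMeasurable X μ) (ha : 0 < a) (hbdd : ∀ᵐ ω ∂μ, |X ω| ≤ a)
    (hvar : 0 < ∫ ω, X ω ^ 2 ∂μ) :
    sakhanenkoParam μ X ≤ (Real.sqrt (∫ ω, X ω ^ 2 ∂μ))⁻¹ :=
  csSup_le ⟨_, by positivity, inv_two_mul_mul_integral_le hX ha hbdd⟩
    fun _ hl => le_inv_sqrt_of_mul_integral_le hX hbdd hvar hl.1 hl.2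

end BoundedRandomVariable

theorem stmt_5_general (Ω : Type*) [MeasurableSpace Ω] (μ : Measure Ω) [IsProbabilityMeasure μ]
    (X : Ω → ℝ) (a : ℝ) (ha : 0 < a) (hmeas : Measurable X)
    (hbdd : ∀ᵐ ω ∂μ, |X ω| ≤ a)
    (hvar : 0 < ∫ ω, (X ω) ^ 2 ∂μ) :
    Real.sqrt (∫ ω, (X ω) ^ 2 ∂μ) ≤ (sakhanenkoParam μ X)⁻¹ ∧
      (sakhanenkoParam μ X)⁻¹ ≤ 2 * a := by
  have hlow := inv_two_mul_le_sakhanenkoParam hmeas.aestronglyMeasurable ha hbdd hvar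
  have hup := sakhanenkoParam_le_inv_sqrt hmeas.aestronglyMeasurable ha hbdd hvar
  have hpos : 0 < sakhanenkoParam μ X := lt_of_lt_of_le (by positivity) hlow
  constructor
  · simpa using inv_anti₀ hpos hup
  · simpa using inv_anti₀ (by positivity) hlow

/-- if `X` is centered, `|X| ≤ a` a.s. with `a > 0` and `𝔼X² > 0`, then
`√(Var X) ≤ λ(X)⁻¹ ≤ 2a` for the Sakhanenko parameter `λ(X)`. -/
theorem stmt_5 (Ω : Type*) [MeasurableSpace Ω] (μ : Measure Ω) [IsProbabilityMeasure μ]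
    (X : Ω → ℝ) (a : ℝ) (ha : 0 < a) (hmeas : Measurable X)
    (hbdd : ∀ᵐ ω ∂μ, |X ω| ≤ a) (hmean : (∫ ω, X ω ∂μ) = 0)
    (hvar : 0 < ∫ ω, (X ω) ^ 2 ∂μ) :
    Real.sqrt (∫ ω, (X ω) ^ 2 ∂μ) ≤ (sakhanenkoParam μ X)⁻¹ ∧
      (sakhanenkoParam μ X)⁻¹ ≤ 2 * a :=
  stmt_5_general Ω μ X a ha hmeas hbdd hvar
end

section
/- Let X be a centered real random variable with 𝔼X² > 0 and finite exponential moments. Then λ(X)⁻¹ ≤ 14·inf_{h>0} 𝔼[e^{h|X|}] / (h³·𝔼X²), where λ(X) is the Sakhanenko parameter. -/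
open MeasureTheory

lemma cube_le_exp {u : ℝ} (hu : 0 ≤ u) : u ^ 3 ≤ 6 * Real.exp u := by
  have := Real.sum_le_exp_of_nonneg hu 4
  simp [Finset.sum_range_succ, Nat.factorial] at this
  nlinarith [sq_nonneg u, pow_nonneg hu 3]

lemma sq_le_exp {u : ℝ} (hu : 0 ≤ u) : u ^ 2 ≤ 2 * Real.exp u := by
  have := Real.sum_le_exp_of_nonneg hu 3
  simp [Finset.sum_range_succ, Nat.factorial] at this
  nlinarith [sq_nonneg u]

/-- for a centered random variable `X` with `𝔼X² > 0` and all exponential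
moments finite, `λ(X)⁻¹ ≤ 14 · inf_{h > 0} 𝔼[e^{h|X|}] / (h³ 𝔼X²)`. -/
theorem stmt_6 (Ω : Type*) [MeasurableSpace Ω] (μ : Measure Ω) [IsProbabilityMeasure μ]
    (X : Ω → ℝ) (hmeas : Measurable X) (hmean : (∫ ω, X ω ∂μ) = 0)
    (hvar : 0 < ∫ ω, (X ω) ^ 2 ∂μ)
    (hexp : ∀ h : ℝ, 0 < h → Integrable (fun ω => Real.exp (h * |X ω|)) μ) :
    (sakhanenkoParam μ X)⁻¹
      ≤ 14 * sInf ((fun h : ℝ =>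
          (∫ ω, Real.exp (h * |X ω|) ∂μ) / (h ^ 3 * ∫ ω, (X ω) ^ 2 ∂μ)) '' Set.Ioi 0) := by
  set V : ℝ := ∫ ω, (X ω) ^ 2 ∂μ with hVdef
  -- measurability of the cube-exp function
  have meas3 : ∀ l : ℝ,
      AEStronglyMeasurable (fun ω => |X ω| ^ 3 * Real.exp (l * |X ω|)) μ := by
    intro l
    exact (((hmeas.abs.pow_const 3).mul
      ((measurable_const.mul hmeas.abs).exp)).aestronglyMeasurable)
  -- integrability of |X|^3 e^{l|X|} for l > 0
  have int3e : ∀ l : ℝ, 0 < l →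
      Integrable (fun ω => |X ω| ^ 3 * Real.exp (l * |X ω|)) μ := by
    intro l hl
    refine Integrable.mono' (((hexp (l + 1) (by linarith)).const_mul 6)) (meas3 l) ?_
    filter_upwards with ω
    have h1 : |X ω| ^ 3 ≤ 6 * Real.exp |X ω| := cube_le_exp (abs_nonneg _)
    have h2 : (0:ℝ) < Real.exp (l * |X ω|) := Real.exp_pos _
    have h3 : Real.exp |X ω| * Real.exp (l * |X ω|) = Real.exp ((l + 1) * |X ω|) := by
      rw [← Real.exp_add]; ring_nf
    rw [Real.norm_eq_abs, abs_of_nonneg (by positivity)]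
    calc |X ω| ^ 3 * Real.exp (l * |X ω|)
        ≤ 6 * Real.exp |X ω| * Real.exp (l * |X ω|) := by nlinarith
      _ = 6 * Real.exp ((l + 1) * |X ω|) := by rw [mul_assoc, h3]
  -- integrability of |X|^3 and X^2
  have int3 : Integrable (fun ω => |X ω| ^ 3) μ := by
    refine Integrable.mono' ((hexp 1 one_pos).const_mul 6)
      ((hmeas.abs.pow_const 3).aestronglyMeasurable) ?_
    filter_upwards with ω
    rw [Real.norm_eq_abs, abs_of_nonneg (by positivity), one_mul]
    exact cube_le_exp (abs_nonneg _)
  have int2 : Integrable (fun ω => (X ω) ^ 2) μ := by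
    refine Integrable.mono' ((hexp 1 one_pos).const_mul 2)
      ((hmeas.pow_const 2).aestronglyMeasurable) ?_
    filter_upwards with ω
    rw [Real.norm_eq_abs, abs_of_nonneg (by positivity), one_mul]
    calc (X ω) ^ 2 = |X ω| ^ 2 := (sq_abs _).symm
      _ ≤ 2 * Real.exp |X ω| := sq_le_exp (abs_nonneg _)
  -- positivity of ∫|X|^3
  have pos3 : 0 < ∫ ω, |X ω| ^ 3 ∂μ := by
    have hnn : 0 ≤ ∫ ω, |X ω| ^ 3 ∂μ :=
      integral_nonneg fun ω => pow_nonneg (abs_nonneg _) 3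
    rcases lt_or_eq_of_le hnn with h | h
    · exact h
    · exfalso
      have h0 : (fun ω => |X ω| ^ 3) =ᵐ[μ] 0 :=
        (integral_eq_zero_iff_of_nonneg (fun ω => by positivity) int3).mp h.symm
      have h2 : (fun ω => (X ω) ^ 2) =ᵐ[μ] 0 := by
        filter_upwards [h0] with ω hω
        simp only [Pi.zero_apply] at hω ⊢
        have hx : |X ω| = 0 := pow_eq_zero_iff (three_ne_zero) |>.mp hω
        simp [← sq_abs, hx]
      have : V = 0 := by
        rw [hVdef, integral_congr_ae h2]
        simp
      linarith
  -- the set is bounded above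
  set S : Set ℝ := {l : ℝ | 0 < l ∧
    l * ∫ ω, |X ω| ^ 3 * Real.exp (l * |X ω|) ∂μ ≤ ∫ ω, (X ω) ^ 2 ∂μ} with hSdef
  have hbdd : BddAbove S := by
    refine ⟨V / ∫ ω, |X ω| ^ 3 ∂μ, fun l hl => ?_⟩
    obtain ⟨hl0, hle⟩ := hl
    have hmono : ∫ ω, |X ω| ^ 3 ∂μ ≤ ∫ ω, |X ω| ^ 3 * Real.exp (l * |X ω|) ∂μ := by
      refine integral_mono int3 (int3e l hl0) (fun ω => ?_)
      have : (1:ℝ) ≤ Real.exp (l * |X ω|) := Real.one_le_exp (by positivity)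
      nlinarith [pow_nonneg (abs_nonneg (X ω)) 3]
    rw [le_div_iff₀ pos3]
    calc l * ∫ ω, |X ω| ^ 3 ∂μ ≤ l * ∫ ω, |X ω| ^ 3 * Real.exp (l * |X ω|) ∂μ :=
          mul_le_mul_of_nonneg_left hmono hl0.le
      _ ≤ V := hle
  -- main estimate for each h > 0
  have main : ∀ h : ℝ, 0 < h →
      (sakhanenkoParam μ X)⁻¹ ≤ 14 * ((∫ ω, Real.exp (h * |X ω|) ∂μ) / (h ^ 3 * V)) := by
    intro h hh
    set E : ℝ := ∫ ω, Real.exp (h * |X ω|) ∂μ with hEdef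
    have hE1 : 1 ≤ E := by
      have : ∫ (_ : Ω), (1:ℝ) ∂μ ≤ E := by
        refine integral_mono (integrable_const 1) (hexp h hh) (fun ω => ?_)
        exact Real.one_le_exp (by positivity)
      simpa using this
    have hE0 : 0 < E := lt_of_lt_of_le one_pos hE1
    -- V ≤ 2/h² E
    have hVE : V ≤ 2 / h ^ 2 * E := by
      rw [hVdef]
      have : ∫ ω, (X ω) ^ 2 ∂μ ≤ ∫ ω, 2 / h ^ 2 * Real.exp (h * |X ω|) ∂μ := by
        refine integral_mono int2 ((hexp h hh).const_mul _) (fun ω => ?_)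
        have hu : (h * |X ω|) ^ 2 ≤ 2 * Real.exp (h * |X ω|) := sq_le_exp (by positivity)
        have h2 : (0:ℝ) < h ^ 2 := by positivity
        rw [div_mul_eq_mul_div, le_div_iff₀ h2]
        calc (X ω) ^ 2 * h ^ 2 = (h * |X ω|) ^ 2 := by rw [mul_pow, ← sq_abs (X ω)]; ring
          _ ≤ 2 * Real.exp (h * |X ω|) := hu
      rwa [integral_const_mul] at this
    set l : ℝ := h ^ 3 * V / (14 * E) with hldef
    have hl0 : 0 < l := by positivity
    have hl7 : l ≤ h / 7 := by
      rw [hldef, div_le_div_iff₀ (by positivity) (by norm_num)]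
      have : h ^ 3 * V ≤ h ^ 3 * (2 / h ^ 2 * E) :=
        mul_le_mul_of_nonneg_left hVE (by positivity)
      have heq : h ^ 3 * (2 / h ^ 2 * E) = 2 * h * E := by
        field_simp
      nlinarith
    -- pointwise key inequality
    have key : ∀ t : ℝ, 0 ≤ t →
        l * (t ^ 3 * Real.exp (l * t)) ≤ V / E * Real.exp (h * t) := by
      intro t ht
      have h1 : Real.exp (l * t) ≤ Real.exp (h / 7 * t) :=
        Real.exp_le_exp.2 (mul_le_mul_of_nonneg_right hl7 ht)
      have h2 : (6 * (h * t) / 7) ^ 3 ≤ 6 * Real.exp (6 * (h * t) / 7) :=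
        cube_le_exp (by positivity)
      have h3 : Real.exp (h / 7 * t) * Real.exp (6 * (h * t) / 7) = Real.exp (h * t) := by
        rw [← Real.exp_add]; ring_nf
    -- h³ t³ ≤ 14 e^{6ht/7}
      have h4 : h ^ 3 * t ^ 3 ≤ 14 * Real.exp (6 * (h * t) / 7) := by
        nlinarith [Real.exp_pos (6 * (h * t) / 7)]
      have h5 : h ^ 3 * t ^ 3 * Real.exp (l * t) ≤ 14 * Real.exp (h * t) := by
        calc h ^ 3 * t ^ 3 * Real.exp (l * t)
            ≤ h ^ 3 * t ^ 3 * Real.exp (h / 7 * t) :=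
              mul_le_mul_of_nonneg_left h1 (by positivity)
          _ ≤ 14 * Real.exp (6 * (h * t) / 7) * Real.exp (h / 7 * t) := by
              nlinarith [Real.exp_pos (h / 7 * t)]
          _ = 14 * Real.exp (h * t) := by rw [mul_assoc, mul_comm (Real.exp _), h3]
      have heq : l * (t ^ 3 * Real.exp (l * t))
          = V / (14 * E) * (h ^ 3 * t ^ 3 * Real.exp (l * t)) := by
        rw [hldef]; field_simp
      rw [heq]
      calc V / (14 * E) * (h ^ 3 * t ^ 3 * Real.exp (l * t))
          ≤ V / (14 * E) * (14 * Real.exp (h * t)) :=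
            mul_le_mul_of_nonneg_left h5 (by positivity)
        _ = V / E * Real.exp (h * t) := by field_simp
    -- l belongs to S
    have hlS : l ∈ S := by
      refine ⟨hl0, ?_⟩
      have hmono : l * ∫ ω, |X ω| ^ 3 * Real.exp (l * |X ω|) ∂μ
          ≤ ∫ ω, V / E * Real.exp (h * |X ω|) ∂μ := by
        rw [← integral_const_mul]
        refine integral_mono ((int3e l hl0).const_mul l) ((hexp h hh).const_mul _)
          (fun ω => ?_)
        exact key |X ω| (abs_nonneg _)
      have hint : ∫ ω, V / E * Real.exp (h * |X ω|) ∂μ = V := by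
        rw [integral_const_mul, ← hEdef, div_mul_cancel₀]
        exact ne_of_gt hE0
      rw [hint] at hmono
      exact hmono
    have hsup : l ≤ sakhanenkoParam μ X := le_csSup hbdd hlS
    have hsakpos : 0 < sakhanenkoParam μ X := lt_of_lt_of_le hl0 hsup
    have hinv : (sakhanenkoParam μ X)⁻¹ ≤ l⁻¹ := inv_anti₀ hl0 hsup
    have : l⁻¹ = 14 * (E / (h ^ 3 * V)) := by
      rw [hldef]; field_simp
    linarith [hinv, this ▸ hinv]
  -- conclude via sInf
  set f : ℝ → ℝ := fun h => (∫ ω, Real.exp (h * |X ω|) ∂μ) / (h ^ 3 * V) with hfdef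
  have hne : (f '' Set.Ioi 0).Nonempty := ⟨f 1, 1, Set.mem_Ioi.2 one_pos, rfl⟩
  have hlb : (sakhanenkoParam μ X)⁻¹ / 14 ≤ sInf (f '' Set.Ioi 0) := by
    refine le_csInf hne ?_
    rintro b ⟨h, hh, rfl⟩
    have := main h (Set.mem_Ioi.1 hh)
    rw [div_le_iff₀ (by norm_num : (0:ℝ) < 14)]
    linarith
  linarith
end

section
/- There exists a constant C > 0 such that for all real λ ≥ 0, all real W ∈ [0,1], all D > 0, and all K > k > 0 with k ≤ K: λ·√((K-k)/K)·W² - D·(λ² ∨ λ)·W^{1/4}/(K-k) ≥ -D^{8/7}·(λ³ ∨ λ)·K^{1/14}/(K-k)^{17/14}. -/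
private lemma stmt9_max_pow (lam : ℝ) (h0 : 0 < lam) :
    (max (lam ^ 2) lam) ^ 8 ≤ lam * (max (lam ^ 3) lam) ^ 7 := by
  rcases le_total lam 1 with h | h
  · have e1 : max (lam ^ 2) lam = lam := max_eq_right (by nlinarith)
    have e2 : max (lam ^ 3) lam = lam := max_eq_right (by nlinarith)
    rw [e1, e2]; nlinarith [pow_nonneg h0.le 8]
  · have e1 : max (lam ^ 2) lam = lam ^ 2 := max_eq_left (by nlinarith)
    have e2 : max (lam ^ 3) lam = lam ^ 3 := max_eq_left (by nlinarith)
    rw [e1, e2]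
    calc (lam ^ 2) ^ 8 = lam ^ 16 := by ring
      _ ≤ lam ^ 22 := pow_le_pow_right₀ h (by norm_num)
      _ = lam * (lam ^ 3) ^ 7 := by ring

private lemma stmt9_core (lam u D t a b M M' : ℝ)
    (hlam : 0 < lam) (hu : 0 < u) (hD : 0 < D) (ht : 0 < t) (ha : 0 < a) (hb : 0 < b)
    (hM : 0 < M) (hM' : 0 ≤ M')
    (h1 : lam * a * u ^ 8 * t < D * M * u * b)
    (hM8 : M ^ 8 ≤ lam * M' ^ 7) :
    D ^ 7 * M ^ 7 * u ^ 7 / t ^ 7 ≤ D ^ 8 * M' ^ 7 * b / (t ^ 8 * a) := by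
  have hu7 : u ^ 7 ≤ D * M * b / (lam * a * t) := by
    rw [le_div_iff₀ (by positivity)]
    have h2 : u ^ 7 * (lam * a * t) * u ≤ D * M * b * u := by nlinarith
    exact le_of_mul_le_mul_right h2 hu
  calc D ^ 7 * M ^ 7 * u ^ 7 / t ^ 7
      ≤ D ^ 7 * M ^ 7 * (D * M * b / (lam * a * t)) / t ^ 7 := by gcongr
    _ = D ^ 8 * M ^ 8 * b / (lam * a * t ^ 8) := by field_simp
    _ ≤ D ^ 8 * M' ^ 7 * b / (t ^ 8 * a) := by
        rw [div_le_div_iff₀ (by positivity) (by positivity)]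
        nlinarith [mul_le_mul_of_nonneg_right hM8
          (show (0:ℝ) ≤ D ^ 8 * b * a * t ^ 8 by positivity)]

/-- there is a constant `C > 0` such that for all `λ ≥ 0`, `W ∈ [0,1]`,
`D > 0` and `0 < k < K`,
`λ √((K-k)/K) W² - D (λ² ∨ λ) W^{1/4}/(K-k) ≥ -D^{8/7} (λ³ ∨ λ) K^{1/14}/(K-k)^{17/14}`. -/
theorem stmt_9 :
    ∃ C : ℝ, 0 < C ∧
      ∀ (lam W D k K : ℝ), 0 ≤ lam → W ∈ Set.Icc (0 : ℝ) 1 → 0 < D → 0 < k → k < K →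
        lam * Real.sqrt ((K - k) / K) * W ^ 2
            - D * max (lam ^ 2) lam * W ^ ((1 : ℝ) / 4) / (K - k)
          ≥ -(D ^ ((8 : ℝ) / 7) * max (lam ^ 3) lam * K ^ ((1 : ℝ) / 14)
              / (K - k) ^ ((17 : ℝ) / 14)) := by
  refine ⟨1, one_pos, ?_⟩
  intro lam W D k K hlam hW hD hk hkK
  obtain ⟨hW0, hW1⟩ := hW
  have hK : 0 < K := hk.trans hkK
  have ht : 0 < K - k := by linarith
  set t := K - k with htdef
  set u := W ^ ((1:ℝ)/4) with hudef
  set M := max (lam ^ 2) lam with hMdef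
  set M' := max (lam ^ 3) lam with hM'def
  have hu0 : 0 ≤ u := Real.rpow_nonneg hW0 _
  have hM0 : 0 ≤ M := le_max_of_le_right hlam
  have hM'0 : 0 ≤ M' := le_max_of_le_right hlam
  have hRHS0 : 0 ≤ D ^ ((8:ℝ)/7) * M' * K ^ ((1:ℝ)/14) / t ^ ((17:ℝ)/14) := by
    positivity
  rcases le_or_gt (D * M * u / t) (lam * Real.sqrt (t / K) * W ^ 2) with hle | hlt
  · have h0 : 0 ≤ lam * Real.sqrt (t / K) * W ^ 2 := by positivity
    linarith
  · have hdrift : 0 ≤ lam * Real.sqrt (t / K) * W ^ 2 := by positivity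
    have hu : 0 < u := by
      rcases hu0.lt_or_eq with h | h
      · exact h
      · exfalso; rw [← h] at hlt; simp at hlt; nlinarith
    have hlampos : 0 < lam := by
      rcases hlam.lt_or_eq with h | h
      · exact h
      · exfalso
        have hMz : M = 0 := by simp [hMdef, ← h]
        rw [hMz] at hlt; simp at hlt; nlinarith
    have hMpos : 0 < M := lt_max_of_lt_right hlampos
    set a := Real.sqrt t with hadef
    set b := Real.sqrt K with hbdef
    have ha : 0 < a := Real.sqrt_pos.mpr ht
    have hb : 0 < b := Real.sqrt_pos.mpr hK
    have hs : Real.sqrt (t / K) = a / b := Real.sqrt_div ht.le K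
    have hW2 : u ^ (8:ℕ) = W ^ 2 := by
      rw [hudef, ← Real.rpow_natCast (W ^ ((1:ℝ)/4)) 8, ← Real.rpow_natCast W 2,
        ← Real.rpow_mul hW0]
      norm_num
    have h1 : lam * a * u ^ 8 * t < D * M * u * b := by
      have h1' := hlt
      rw [hs, ← hW2] at h1'
      rw [show lam * (a/b) * u ^ (8:ℕ) = (lam * a * u ^ 8) / b by ring,
        div_lt_div_iff₀ hb ht] at h1'
      exact h1'
    have hM8 : M ^ 8 ≤ lam * M' ^ 7 := stmt9_max_pow lam hlampos
    have hE : (D ^ ((8:ℝ)/7)) ^ (7:ℕ) = D ^ 8 := by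
      rw [← Real.rpow_natCast (D ^ ((8:ℝ)/7)) 7, ← Real.rpow_mul hD.le,
        ← Real.rpow_natCast D 8]
      norm_num
    have hK7 : (K ^ ((1:ℝ)/14)) ^ (7:ℕ) = b := by
      rw [← Real.rpow_natCast (K ^ ((1:ℝ)/14)) 7, ← Real.rpow_mul hK.le,
        hbdef, Real.sqrt_eq_rpow]
      norm_num
    have hT7 : (t ^ ((17:ℝ)/14)) ^ (7:ℕ) = t ^ 8 * a := by
      rw [← Real.rpow_natCast (t ^ ((17:ℝ)/14)) 7, ← Real.rpow_mul ht.le,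
        hadef, Real.sqrt_eq_rpow, ← Real.rpow_natCast t 8, ← Real.rpow_add ht]
      norm_num
    have herr : D * M * u / t ≤ D ^ ((8:ℝ)/7) * M' * K ^ ((1:ℝ)/14) / t ^ ((17:ℝ)/14) := by
      apply le_of_pow_le_pow_left₀ (n := 7) (by norm_num) hRHS0
      rw [div_pow, div_pow, mul_pow, mul_pow, mul_pow, mul_pow, hE, hK7, hT7]
      exact stmt9_core lam u D t a b M M' hlampos hu hD ht ha hb hMpos hM'0 h1 hM8
    linarith
end

section
/- Let ψ: [0,1] → ℝ be defined via two sequences θ_ℓ, θ'_ℓ > 0 (ℓ > k₀) with θ_ℓ = arcsin(√(4 - z_ℓ²)/2) for z_ℓ = z√(n/ℓ) and similarly θ'_ℓ for z'. If 0 < z' < z < 2 and ψ_ℓ = θ'_ℓ - θ_ℓ, then for k₀ < k ≤ ℓ one has ψ_ℓ > 0 and the comparison |ψ_ℓ - ψ_k| ≤ C·((ℓ-k)/(k - k₀))·ψ_k for a constant C depending only on bounds z, z' ∈ [η, 2-η], where k₀ = ⌊z²n/4⌋ and ℓ - k ≤ k - k₀. -/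
/-!
With `s = z²n/4` one has `z_j / 2 = √(s/j)`, so `θ_j = arccos √(s/j)`, whose derivative in `s` is
`-1 / (2√s √(j - s))`. Cauchy's mean value theorem on `[z'²n/4, z²n/4]` gives a point `c` below
`z²n/4 < k₀ + 1` with `ψ_ℓ √(ℓ - c) = ψ_k √(k - c)`. Hence `ψ_ℓ ≤ ψ_k` and
`ψ_k - ψ_ℓ ≤ (ℓ - k)/(ℓ - c) · ψ_k`, and `ℓ - c ≥ k - k₀` as soon as `ℓ > k`; so `C = 1` works.
-/

open Real Set

lemma arcsin_sqrt_four_sub_sq_div_two {w : ℝ} (hw : 0 ≤ w) :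
    arcsin (√(4 - w ^ 2) / 2) = arccos (w / 2) := by
  rw [arccos_eq_arcsin (by positivity), show 4 - w ^ 2 = 2 ^ 2 * (1 - (w / 2) ^ 2) by ring,
    sqrt_mul (by norm_num), sqrt_sq (by norm_num), mul_div_cancel_left₀ _ two_ne_zero]

lemma arcsin_sqrt_four_sub_mul_sqrt_sq {z : ℝ} (hz : 0 ≤ z) (n j : ℝ) :
    arcsin (√(4 - (z * √(n / j)) ^ 2) / 2) = arccos √(z ^ 2 * n / 4 / j) := by
  rw [arcsin_sqrt_four_sub_sq_div_two (by positivity), mul_div_right_comm,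
    show z ^ 2 * n / 4 / j = (z / 2) ^ 2 * (n / j) by ring, sqrt_mul (by positivity),
    sqrt_sq (by positivity)]

lemma hasDerivAt_arccos_sqrt_div {s j : ℝ} (hs : 0 < s) (hsj : s < j) :
    HasDerivAt (fun t => arccos √(t / j)) (-(2 * √s * √(j - s))⁻¹) s := by
  have hj : 0 < j := hs.trans hsj
  have hr : √(s / j) < 1 := (sqrt_lt' one_pos).2 (by rw [one_pow]; exact (div_lt_one hj).2 hsj)
  have hsqrt := ((hasDerivAt_id s).div_const j).sqrt (div_pos hs hj).ne'
  refine ((hasDerivAt_arccos (by linarith [sqrt_nonneg (s / j)]) hr.ne).comp s hsqrt).congr_deriv ?_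
  simp only [id]
  rw [sq_sqrt (div_pos hs hj).le, sqrt_div hs.le, one_sub_div hj.ne', sqrt_div (by linarith)]
  have : 0 < √j := sqrt_pos.2 hj
  have : 0 < √s := sqrt_pos.2 hs
  have : 0 < √(j - s) := sqrt_pos.2 (by linarith)
  field_simp
  rw [sq_sqrt hj.le]

lemma strictAntiOn_arccos_sqrt_div {j : ℝ} (hj : 0 < j) :
    StrictAntiOn (fun t => arccos √(t / j)) (Icc 0 j) := by
  intro s hs t ht hst
  have hmem : ∀ u ∈ Icc 0 j, √(u / j) ∈ Icc (-1 : ℝ) 1 := fun u hu =>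
    ⟨by linarith [sqrt_nonneg (u / j)], sqrt_le_one.2 (div_le_one_of_le₀ hu.2 hj.le)⟩
  exact strictAntiOn_arccos (hmem s hs) (hmem t ht)
    (sqrt_lt_sqrt (div_nonneg hs.1 hj.le) (div_lt_div_of_pos_right hst hj))

/-- With `a = z'²n/4` and `b = z²n/4` this is `ψ_j = θ'_j - θ_j`. -/
noncomputable def angleGap (j a b : ℝ) : ℝ := arccos √(a / j) - arccos √(b / j)

lemma angleGap_pos {j a b : ℝ} (ha : 0 ≤ a) (hab : a < b) (hbj : b ≤ j) : 0 < angleGap j a b :=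
  sub_pos.2 <| strictAntiOn_arccos_sqrt_div (ha.trans_lt (hab.trans_le hbj)) ⟨ha, hab.le.trans hbj⟩
    ⟨ha.trans hab.le, hbj⟩ hab

lemma exists_angleGap_mul_sqrt_eq {a b k ℓ : ℝ} (ha : 0 ≤ a) (hab : a < b) (hbk : b < k)
    (hbℓ : b < ℓ) : ∃ c ∈ Ioo a b, angleGap ℓ a b * √(ℓ - c) = angleGap k a b * √(k - c) := by
  have hcont : ∀ j, ContinuousOn (fun t => arccos √(t / j)) (Icc a b) := fun j => by fun_prop
  obtain ⟨c, hc, h⟩ := exists_ratio_hasDerivAt_eq_ratio_slope _ _ hab (hcont ℓ)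
    (fun c hc => hasDerivAt_arccos_sqrt_div (ha.trans_lt hc.1) (hc.2.trans hbℓ)) _ _ (hcont k)
    (fun c hc => hasDerivAt_arccos_sqrt_div (ha.trans_lt hc.1) (hc.2.trans hbk))
  refine ⟨c, hc, ?_⟩
  have : 0 < √c := sqrt_pos.2 (ha.trans_lt hc.1)
  have : 0 < √(k - c) := sqrt_pos.2 (by linarith [hc.2])
  have : 0 < √(ℓ - c) := sqrt_pos.2 (by linarith [hc.2])
  unfold angleGap
  field_simp at h
  linear_combination -h

lemma sub_mem_Icc_of_mul_sqrt_eq {x y c k ℓ : ℝ} (hy : 0 ≤ y) (hck : c < k) (hkℓ : k ≤ ℓ)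
    (h : x * √(ℓ - c) = y * √(k - c)) : y - x ∈ Icc 0 ((ℓ - k) / (ℓ - c) * y) := by
  have hp : 0 < √(k - c) := sqrt_pos.2 (by linarith)
  have hpq : √(k - c) ≤ √(ℓ - c) := sqrt_le_sqrt (by linarith)
  have hp2 := sq_sqrt (by linarith : 0 ≤ k - c)
  have hq2 := sq_sqrt (by linarith : 0 ≤ ℓ - c)
  constructor
  · nlinarith
  · rw [div_mul_eq_mul_div, le_div_iff₀ (by linarith)]
    have hxq : x * (ℓ - c) = y * √(k - c) * √(ℓ - c) := by
      rw [← h, mul_assoc, mul_self_sqrt (by linarith)]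
    nlinarith [mul_le_mul_of_nonneg_left hpq (mul_nonneg hy hp.le)]

lemma abs_angleGap_sub_le {a b k ℓ : ℝ} (ha : 0 ≤ a) (hab : a < b) (hbk : b < k) (hkℓ : k ≤ ℓ) :
    |angleGap ℓ a b - angleGap k a b| ≤ (ℓ - k) / (ℓ - b) * angleGap k a b := by
  have hψk := (angleGap_pos ha hab hbk.le).le
  obtain ⟨c, hc, h⟩ := exists_angleGap_mul_sqrt_eq ha hab hbk (hbk.trans_le hkℓ)
  obtain ⟨hle, hsub⟩ := sub_mem_Icc_of_mul_sqrt_eq hψk (hc.2.trans hbk) hkℓ h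
  rw [abs_sub_comm, abs_of_nonneg hle]
  refine hsub.trans (mul_le_mul_of_nonneg_right ?_ hψk)
  exact div_le_div_of_nonneg_left (by linarith) (by linarith) (by linarith [hc.2])

/-- fix `η > 0`. There is a constant `C > 0` (depending only on `η`) such
that for `z, z' ∈ [η, 2-η]` with `z' < z`, `n ≥ 1`, `k₀ = ⌊z²n/4⌋`, and integers
`k₀ < k ≤ ℓ` with `ℓ - k ≤ k - k₀`, the difference `ψ_j = θ'_j - θ_j` of the angles
`θ_j = arcsin(√(4 - z_j²)/2)`, `z_j = z√(n/j)` (resp. `θ'_j` for `z'`) satisfies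
`ψ_ℓ > 0` and `|ψ_ℓ - ψ_k| ≤ C ((ℓ-k)/(k-k₀)) ψ_k`. -/
theorem stmt_16 (η : ℝ) (hη : 0 < η) :
    ∃ C : ℝ, 0 < C ∧
      ∀ (z z' : ℝ) (n k ℓ : ℕ),
        z ∈ Set.Icc η (2 - η) → z' ∈ Set.Icc η (2 - η) → z' < z → 1 ≤ n →
        Nat.floor (z ^ 2 * n / 4) < k → k ≤ ℓ →
        ℓ - k ≤ k - Nat.floor (z ^ 2 * n / 4) →
        (0 < (Real.arcsin (Real.sqrt (4 - (z' * Real.sqrt (n / ℓ)) ^ 2) / 2)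
              - Real.arcsin (Real.sqrt (4 - (z * Real.sqrt (n / ℓ)) ^ 2) / 2)))
        ∧ |(Real.arcsin (Real.sqrt (4 - (z' * Real.sqrt (n / ℓ)) ^ 2) / 2)
              - Real.arcsin (Real.sqrt (4 - (z * Real.sqrt (n / ℓ)) ^ 2) / 2))
            - (Real.arcsin (Real.sqrt (4 - (z' * Real.sqrt (n / k)) ^ 2) / 2)
              - Real.arcsin (Real.sqrt (4 - (z * Real.sqrt (n / k)) ^ 2) / 2))|
          ≤ C * (((ℓ : ℝ) - k) / ((k : ℝ) - Nat.floor (z ^ 2 * n / 4)))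
            * (Real.arcsin (Real.sqrt (4 - (z' * Real.sqrt (n / k)) ^ 2) / 2)
              - Real.arcsin (Real.sqrt (4 - (z * Real.sqrt (n / k)) ^ 2) / 2)) := by
  refine ⟨1, one_pos, fun z z' n k ℓ _ hz' hzz hn hk hkℓ _ => ?_⟩
  have hz' : 0 ≤ z' := hη.le.trans hz'.1
  have hn : (0 : ℝ) < n := by exact_mod_cast hn
  have hab : z' ^ 2 * n / 4 < z ^ 2 * n / 4 := by gcongr
  have hbk₀ : z ^ 2 * n / 4 < ⌊z ^ 2 * n / 4⌋₊ + 1 := Nat.lt_floor_add_one _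
  have hk₀k : (⌊z ^ 2 * n / 4⌋₊ : ℝ) + 1 ≤ k := by exact_mod_cast hk
  have hkℓ' : (k : ℝ) ≤ ℓ := by exact_mod_cast hkℓ
  simp only [arcsin_sqrt_four_sub_mul_sqrt_sq hz', arcsin_sqrt_four_sub_mul_sqrt_sq (hz'.trans hzz.le)]
  refine ⟨angleGap_pos (by positivity) hab (by linarith),
    (abs_angleGap_sub_le (by positivity) hab (by linarith) hkℓ').trans ?_⟩
  rw [one_mul]
  refine mul_le_mul_of_nonneg_right ?_ (angleGap_pos (by positivity) hab (by linarith)).le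
  obtain rfl | hkℓ := hkℓ.eq_or_lt
  · simp
  · have hkℓ : (k : ℝ) + 1 ≤ ℓ := by exact_mod_cast hkℓ
    exact div_le_div_of_nonneg_left (by linarith) (by linarith) (by linarith)
end

section
/- Let ξ₁, ..., ξ_m be independent centered real random variables such that 𝔼|ξ_i|³ ≤ M·(𝔼ξ_i²)^{3/2} for all i, for some M > 0, and let S = ξ₁ + ⋯ + ξ_m. Then there is a constant C = C(M) such that for every t ≥ (1/8)·max_i √(𝔼ξ_i²), the Lévy concentration function satisfies Q_S(t) := sup_{a∈ℝ} P(|S - a| ≤ t) ≤ C·t / √(Σ_{i=1}^m 𝔼ξ_i²). -/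
/-
Esseen's smoothing inequality with the Fejér kernel
`K(r) = ∫_{-1}^{1} (1 - |s|) cos (s r) ds = 2 (1 - cos r) / r²`: since `K ≥ 0` and
`K ≥ 43/48` on `[-1, 1]`, Fubini gives `P(|S - a| ≤ t) ≤ (48/43) ∫_{-1}^{1} |φ_S(T s)| ds`
whenever `T t ≤ 1`. A third-order Taylor expansion of `exp (i u ξ)` gives
`|φ_ξ(u)| ≤ exp (-σ² u² / 4)` as soon as `σ |u|` and `M σ |u|` are small, where `σ² = 𝔼ξ²`.
Since every `σ_i ≤ 8 t`, this holds for all `|u| ≤ T = 1 / (32 (M + 1) t)`; by independence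
`|φ_S(u)| ≤ exp (-(Σ σ_i²) u² / 4)` there, and the Gaussian integral yields
`P(|S - a| ≤ t) ≲ (M + 1) t / √(Σ σ_i²)`.
-/

open MeasureTheory ProbabilityTheory
open Complex (I)

lemma norm_sub_le_abs_pow_succ_of_norm_deriv_le {E : Type*} [NormedAddCommGroup E] [NormedSpace ℝ E]
    {f f' : ℝ → E} {n : ℕ} (hf : ∀ y, HasDerivAt f (f' y) y) (hf' : ∀ y, ‖f' y‖ ≤ |y| ^ n)
    (x : ℝ) : ‖f x - f 0‖ ≤ |x| ^ (n + 1) := by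
  have hbound : ∀ y ∈ Set.uIcc 0 x, ‖f' y‖ ≤ |x| ^ n := fun y hy =>
    (hf' y).trans <| pow_le_pow_left₀ (abs_nonneg y)
      (by simpa using Set.abs_sub_left_of_mem_uIcc hy) n
  simpa [pow_succ] using Convex.norm_image_sub_le_of_norm_hasDerivWithin_le
    (fun y _ => (hf y).hasDerivWithinAt) hbound (convex_uIcc 0 x) Set.left_mem_uIcc
    Set.right_mem_uIcc

lemma hasDerivAt_ofReal (y : ℝ) : HasDerivAt (fun x : ℝ => (x : ℂ)) 1 y := by
  simpa using (hasDerivAt_id y).ofReal_comp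

lemma hasDerivAt_cexp_ofReal_mul_I (y : ℝ) :
    HasDerivAt (fun x : ℝ => Complex.exp (x * I)) (Complex.exp (y * I) * I) y := by
  simpa using ((hasDerivAt_ofReal y).mul_const I).cexp

lemma norm_cexp_ofReal_mul_I_sub_one_sub_le (x : ℝ) :
    ‖Complex.exp (x * I) - 1 - x * I‖ ≤ |x| ^ 2 := by
  have hf (y : ℝ) : HasDerivAt (fun x : ℝ => Complex.exp (x * I) - 1 - x * I)
      ((Complex.exp (y * I) - 1) * I) y := by
    simpa [sub_mul] using ((hasDerivAt_cexp_ofReal_mul_I y).sub_const 1).fun_sub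
      ((hasDerivAt_ofReal y).mul_const I)
  simpa using norm_sub_le_abs_pow_succ_of_norm_deriv_le (n := 1) hf
    (fun y => by simpa [mul_comm] using Real.norm_exp_I_mul_ofReal_sub_one_le (x := y)) x

lemma norm_cexp_ofReal_mul_I_sub_one_sub_add_le (x : ℝ) :
    ‖Complex.exp (x * I) - 1 - x * I + x ^ 2 / 2‖ ≤ |x| ^ 3 := by
  have hf (y : ℝ) : HasDerivAt (fun x : ℝ => Complex.exp (x * I) - 1 - x * I + (x : ℂ) ^ 2 / 2)
      ((Complex.exp (y * I) - 1 - y * I) * I) y := by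
    have hsq : HasDerivAt (fun x : ℝ => (x : ℂ) ^ 2 / 2) (y : ℂ) y := by
      simpa using ((hasDerivAt_ofReal y).pow 2).div_const 2
    refine ((((hasDerivAt_cexp_ofReal_mul_I y).sub_const 1).fun_sub
      ((hasDerivAt_ofReal y).mul_const I)).fun_add hsq).congr_deriv ?_
    linear_combination (y : ℂ) * Complex.I_sq
  simpa using norm_sub_le_abs_pow_succ_of_norm_deriv_le (n := 2) hf
    (fun y => by simpa using norm_cexp_ofReal_mul_I_sub_one_sub_le y) x

section CharFun

variable {Ω : Type*} [MeasurableSpace Ω] {μ : Measure Ω} [IsProbabilityMeasure μ] {X : Ω → ℝ}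

lemma norm_charFun_map_sub_le (hX : Measurable X) (hX3 : Integrable (fun ω => |X ω| ^ 3) μ)
    (hX0 : ∫ ω, X ω ∂μ = 0) (u : ℝ) :
    ‖charFun (μ.map X) u - ((1 - (∫ ω, X ω ^ 2 ∂μ) * u ^ 2 / 2 : ℝ) : ℂ)‖
      ≤ |u| ^ 3 * ∫ ω, |X ω| ^ 3 ∂μ := by
  have hX3' : Integrable (fun ω => ‖X ω‖ ^ 3) μ := by simpa using hX3
  have hX1 : Integrable X μ := by
    refine (integrable_norm_iff hX.aestronglyMeasurable).1 ?_
    simpa using integrable_norm_pow_of_le hX.aestronglyMeasurable (by norm_num : 1 ≤ 3) hX3'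
  have hX2 : Integrable (fun ω => X ω ^ 2) μ := by
    simpa using integrable_norm_pow_of_le hX.aestronglyMeasurable (by norm_num : 2 ≤ 3) hX3'
  set P : Ω → ℂ := fun ω => 1 + ((u * X ω : ℝ) : ℂ) * I - ((u ^ 2 / 2 * X ω ^ 2 : ℝ) : ℂ)
  set R : Ω → ℂ := fun ω => Complex.exp (((u * X ω : ℝ) : ℂ) * I) - 1 - ((u * X ω : ℝ) : ℂ) * I
    + ((u * X ω : ℝ) : ℂ) ^ 2 / 2
  have hR_le (ω : Ω) : ‖R ω‖ ≤ |u| ^ 3 * |X ω| ^ 3 := by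
    simpa only [abs_mul, mul_pow] using norm_cexp_ofReal_mul_I_sub_one_sub_add_le (u * X ω)
  have hlin : Integrable (fun ω => ((u * X ω : ℝ) : ℂ) * I) μ :=
    (hX1.const_mul u).ofReal.mul_const I
  have hquad : Integrable (fun ω => ((u ^ 2 / 2 * X ω ^ 2 : ℝ) : ℂ)) μ :=
    (hX2.const_mul _).ofReal
  have haffine : Integrable (fun ω => 1 + ((u * X ω : ℝ) : ℂ) * I) μ :=
    (integrable_const 1).add hlin
  have hP : Integrable P μ := haffine.sub hquad
  have hR : Integrable R μ :=
    .mono' (hX3.const_mul (|u| ^ 3)) (by fun_prop) (.of_forall hR_le)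
  have hsplit : charFun (μ.map X) u = ∫ ω, P ω ∂μ + ∫ ω, R ω ∂μ := by
    rw [← integral_add hP hR, charFun_apply_real, integral_map hX.aemeasurable (by fun_prop)]
    congr with ω
    simp only [P, R]
    push_cast
    ring
  have hP_int : ∫ ω, P ω ∂μ = ((1 - (∫ ω, X ω ^ 2 ∂μ) * u ^ 2 / 2 : ℝ) : ℂ) := by
    simp only [P]
    rw [integral_sub haffine hquad, integral_add (integrable_const 1) hlin,
      integral_mul_const, integral_complex_ofReal, integral_complex_ofReal, integral_const_mul,
      integral_const_mul, hX0, integral_const, probReal_univ, one_smul]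
    push_cast
    ring
  rw [hsplit, hP_int, add_sub_cancel_left]
  calc ‖∫ ω, R ω ∂μ‖ ≤ ∫ ω, |u| ^ 3 * |X ω| ^ 3 ∂μ :=
        norm_integral_le_of_norm_le (hX3.const_mul _) (.of_forall hR_le)
    _ = |u| ^ 3 * ∫ ω, |X ω| ^ 3 ∂μ := integral_const_mul _ _

lemma norm_charFun_map_le_exp (hX : Measurable X) (hX3 : Integrable (fun ω => |X ω| ^ 3) μ)
    (hX0 : ∫ ω, X ω ∂μ = 0) {M u : ℝ}
    (hmom : ∫ ω, |X ω| ^ 3 ∂μ ≤ M * (∫ ω, X ω ^ 2 ∂μ) ^ ((3 : ℝ) / 2))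
    (hu₁ : √(∫ ω, X ω ^ 2 ∂μ) * |u| ≤ 1) (hu₂ : M * √(∫ ω, X ω ^ 2 ∂μ) * |u| ≤ 1 / 4) :
    ‖charFun (μ.map X) u‖ ≤ Real.exp (-(∫ ω, X ω ^ 2 ∂μ) * u ^ 2 / 4) := by
  set v := ∫ ω, X ω ^ 2 ∂μ
  have hv : 0 ≤ v := integral_nonneg fun ω => sq_nonneg _
  have hvu : v * u ^ 2 = (√v * |u|) ^ 2 := by rw [mul_pow, Real.sq_sqrt hv, sq_abs]
  have hthird : |u| ^ 3 * ∫ ω, |X ω| ^ 3 ∂μ ≤ v * u ^ 2 / 4 := by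
    have hrpow : v ^ ((3 : ℝ) / 2) = √v ^ 3 := by
      rw [Real.sqrt_eq_rpow, ← Real.rpow_natCast, ← Real.rpow_mul hv]
      norm_num
    calc |u| ^ 3 * ∫ ω, |X ω| ^ 3 ∂μ ≤ |u| ^ 3 * (M * √v ^ 3) := by
          rw [← hrpow]; gcongr
      _ = (M * √v * |u|) * (√v * |u|) ^ 2 := by ring
      _ ≤ 1 / 4 * (√v * |u|) ^ 2 := by gcongr
      _ = v * u ^ 2 / 4 := by rw [hvu]; ring
  have hsmall : v * u ^ 2 ≤ 1 := by
    rw [hvu]; nlinarith [mul_nonneg (Real.sqrt_nonneg v) (abs_nonneg u)]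
  calc ‖charFun (μ.map X) u‖
      ≤ ‖((1 - v * u ^ 2 / 2 : ℝ) : ℂ)‖
        + ‖charFun (μ.map X) u - ((1 - v * u ^ 2 / 2 : ℝ) : ℂ)‖ := norm_le_insert' _ _
    _ ≤ (1 - v * u ^ 2 / 2) + v * u ^ 2 / 4 := by
        rw [Complex.norm_real, Real.norm_of_nonneg (by linarith)]
        linarith [norm_charFun_map_sub_le hX hX3 hX0 u]
    _ = -v * u ^ 2 / 4 + 1 := by ring
    _ ≤ Real.exp (-v * u ^ 2 / 4) := Real.add_one_le_exp _

lemma norm_charFun_map_sum_le_exp {ι : Type*} [Fintype ι] {ξ : ι → Ω → ℝ}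
    (hmeas : ∀ i, Measurable (ξ i)) (hind : iIndepFun ξ μ)
    (hint3 : ∀ i, Integrable (fun ω => |ξ i ω| ^ 3) μ) (hmean : ∀ i, ∫ ω, ξ i ω ∂μ = 0)
    {M u : ℝ} (hmom : ∀ i, ∫ ω, |ξ i ω| ^ 3 ∂μ ≤ M * (∫ ω, ξ i ω ^ 2 ∂μ) ^ ((3 : ℝ) / 2))
    (hu₁ : ∀ i, √(∫ ω, ξ i ω ^ 2 ∂μ) * |u| ≤ 1)
    (hu₂ : ∀ i, M * √(∫ ω, ξ i ω ^ 2 ∂μ) * |u| ≤ 1 / 4) :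
    ‖charFun (μ.map fun ω => ∑ i, ξ i ω) u‖
      ≤ Real.exp (-(∑ i, ∫ ω, ξ i ω ^ 2 ∂μ) * u ^ 2 / 4) := by
  rw [hind.charFun_map_fun_sum_eq_prod fun i => (hmeas i).aemeasurable, Finset.prod_apply,
    norm_prod, neg_mul, Finset.sum_mul, ← Finset.sum_neg_distrib, Finset.sum_div, Real.exp_sum]
  refine Finset.prod_le_prod (fun i _ => norm_nonneg _) fun i _ => ?_
  rw [← neg_mul]
  exact norm_charFun_map_le_exp (hmeas i) (hint3 i) (hmean i) (hmom i) (hu₁ i) (hu₂ i)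

end CharFun

section FejerKernel

open intervalIntegral

noncomputable def fejerKernel (r : ℝ) : ℝ := ∫ s in (-1 : ℝ)..1, (1 - |s|) * Real.cos (s * r)

lemma fejerKernel_eq_two_mul (r : ℝ) :
    fejerKernel r = 2 * ∫ s in (0 : ℝ)..1, (1 - s) * Real.cos (s * r) := by
  have hint (a b : ℝ) : IntervalIntegrable (fun s : ℝ => (1 - |s|) * Real.cos (s * r)) volume a b :=
    (by fun_prop : Continuous fun s : ℝ => (1 - |s|) * Real.cos (s * r)).intervalIntegrable a b
  have hneg : ∫ s in (-1 : ℝ)..0, (1 - |s|) * Real.cos (s * r)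
      = ∫ s in (0 : ℝ)..1, (1 - |s|) * Real.cos (s * r) := by
    simpa using (integral_comp_neg (a := 0) (b := 1)
      fun s : ℝ => (1 - |s|) * Real.cos (s * r)).symm
  have habs : ∫ s in (0 : ℝ)..1, (1 - |s|) * Real.cos (s * r)
      = ∫ s in (0 : ℝ)..1, (1 - s) * Real.cos (s * r) :=
    integral_congr fun s hs => by
      rw [Set.uIcc_of_le zero_le_one] at hs
      simp only [abs_of_nonneg hs.1]
  rw [fejerKernel, ← integral_add_adjacent_intervals (hint (-1) 0) (hint 0 1), hneg, habs, two_mul]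

lemma fejerKernel_zero : fejerKernel 0 = 1 := by
  rw [fejerKernel_eq_two_mul]
  simp only [mul_zero, Real.cos_zero, mul_one]
  rw [integral_sub intervalIntegrable_const intervalIntegral.intervalIntegrable_id, integral_id]
  norm_num

lemma fejerKernel_of_ne_zero {r : ℝ} (hr : r ≠ 0) :
    fejerKernel r = 2 * (1 - Real.cos r) / r ^ 2 := by
  have hderiv (s : ℝ) : HasDerivAt
      (fun s : ℝ => (1 - s) * (Real.sin (s * r) / r) - Real.cos (s * r) / r ^ 2)
      ((1 - s) * Real.cos (s * r)) s := by
    have hsin := ((hasDerivAt_mul_const (x := s) r).sin).div_const r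
    have hcos := ((hasDerivAt_mul_const (x := s) r).cos).div_const (r ^ 2)
    refine ((((hasDerivAt_id s).const_sub 1).mul hsin).sub hcos).congr_deriv ?_
    simp only [id]
    field_simp
    ring
  rw [fejerKernel_eq_two_mul, integral_eq_sub_of_hasDerivAt (fun s _ => hderiv s)
    ((by fun_prop : Continuous fun s : ℝ => (1 - s) * Real.cos (s * r)).intervalIntegrable 0 1)]
  field_simp
  simp only [sub_self, zero_mul, zero_sub, sub_zero, mul_one, mul_zero, Real.sin_zero,
    Real.cos_zero, sub_neg_eq_add]
  ring

lemma fejerKernel_nonneg (r : ℝ) : 0 ≤ fejerKernel r := by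
  rcases eq_or_ne r 0 with rfl | hr
  · simp [fejerKernel_zero]
  · rw [fejerKernel_of_ne_zero hr]
    have := Real.cos_le_one r
    positivity

lemma le_fejerKernel {r : ℝ} (hr : |r| ≤ 1) : 43 / 48 ≤ fejerKernel r := by
  rcases eq_or_ne r 0 with rfl | hr0
  · norm_num [fejerKernel_zero]
  rw [fejerKernel_of_ne_zero hr0, le_div_iff₀ (by positivity)]
  have hcos := (abs_le.1 (Real.cos_bound hr)).2
  have hr4 : |r| ^ 4 ≤ r ^ 2 := by
    rw [← sq_abs r]; nlinarith [abs_nonneg r, pow_le_one₀ (abs_nonneg r) hr (n := 2)]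
  nlinarith

lemma continuous_fejerKernel : Continuous fejerKernel :=
  continuous_parametric_intervalIntegral_of_continuous' (by fun_prop) _ _

lemma abs_fejerKernel_le (r : ℝ) : |fejerKernel r| ≤ 2 := by
  have := norm_integral_le_of_norm_le_const (a := -1) (b := 1) (C := 1)
    (f := fun s : ℝ => (1 - |s|) * Real.cos (s * r)) fun s hs => by
      rw [Set.uIoc_of_le (by norm_num), Set.mem_Ioc] at hs
      have : |s| ≤ 1 := abs_le.2 ⟨hs.1.le, hs.2⟩
      rw [norm_mul, Real.norm_of_nonneg (by linarith)]
      have hcos : ‖Real.cos (s * r)‖ ≤ 1 := Real.abs_cos_le_one _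
      nlinarith [abs_nonneg s, norm_nonneg (Real.cos (s * r))]
  norm_num at this
  simpa [fejerKernel] using this

end FejerKernel

section Esseen

variable (ν : Measure ℝ)

lemma integral_cos_mul_sub_le_norm_charFun [IsFiniteMeasure ν] (u a : ℝ) :
    ∫ x, Real.cos (u * (x - a)) ∂ν ≤ ‖charFun ν u‖ := by
  have hexp (x : ℝ) : Real.cos (u * (x - a))
      = (Complex.exp (↑(-(u * a)) * I) * Complex.exp (u * x * I)).re := by
    rw [← Complex.exp_add, ← Complex.exp_ofReal_mul_I_re]
    push_cast
    ring_nf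
  have hint : Integrable (fun x : ℝ => Complex.exp (↑(-(u * a)) * I) * Complex.exp (u * x * I)) ν :=
    .of_bound (by fun_prop) 1 (.of_forall fun x => by
      rw [norm_mul, ← Complex.ofReal_mul, Complex.norm_exp_ofReal_mul_I,
        Complex.norm_exp_ofReal_mul_I, one_mul])
  simp_rw [hexp]
  calc _ = (Complex.exp (↑(-(u * a)) * I) * charFun ν u).re := by
        rw [charFun_apply_real, ← MeasureTheory.integral_const_mul]; exact integral_re hint
    _ ≤ ‖Complex.exp (↑(-(u * a)) * I) * charFun ν u‖ := Complex.re_le_norm _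
    _ = ‖charFun ν u‖ := by rw [norm_mul, Complex.norm_exp_ofReal_mul_I, one_mul]

lemma integral_fejerKernel_le_integral_norm_charFun [IsFiniteMeasure ν] (a T : ℝ) :
    ∫ x, fejerKernel (T * (x - a)) ∂ν ≤ ∫ s in (-1 : ℝ)..1, ‖charFun ν (T * s)‖ := by
  set ρ := volume.restrict (Set.Ioc (-1 : ℝ) 1)
  set F : ℝ → ℝ → ℝ := fun x s => (1 - |s|) * Real.cos (s * (T * (x - a)))
  have hmem : ∀ᵐ p ∂(ν.prod ρ), p.2 ∈ Set.Ioc (-1 : ℝ) 1 :=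
    Measure.quasiMeasurePreserving_snd.ae (ae_restrict_mem measurableSet_Ioc)
  have hF : Integrable (Function.uncurry F) (ν.prod ρ) := by
    refine .of_bound (by fun_prop) 1 (hmem.mono fun p hp => ?_)
    have hs : |p.2| ≤ 1 := abs_le.2 ⟨hp.1.le, hp.2⟩
    have hcos : ‖Real.cos (p.2 * (T * (p.1 - a)))‖ ≤ 1 := Real.abs_cos_le_one _
    simp only [Function.uncurry, F, norm_mul, Real.norm_of_nonneg (sub_nonneg.2 hs)]
    nlinarith [abs_nonneg p.2, norm_nonneg (Real.cos (p.2 * (T * (p.1 - a))))]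
  have hinner : ∀ᵐ s ∂ρ, ∫ x, F x s ∂ν ≤ ‖charFun ν (T * s)‖ := by
    filter_upwards [ae_restrict_mem measurableSet_Ioc] with s hs
    have hs' : 0 ≤ 1 - |s| := sub_nonneg.2 (abs_le.2 ⟨hs.1.le, hs.2⟩)
    have hcos := integral_cos_mul_sub_le_norm_charFun ν (T * s) a
    simp only [F, MeasureTheory.integral_const_mul, mul_left_comm s T, mul_assoc] at hcos ⊢
    nlinarith [norm_nonneg (charFun ν (T * s)), abs_nonneg s]
  calc ∫ x, fejerKernel (T * (x - a)) ∂ν = ∫ x, ∫ s, F x s ∂ρ ∂ν := by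
        simp only [fejerKernel, intervalIntegral.integral_of_le (by norm_num : (-1 : ℝ) ≤ 1), F, ρ]
    _ = ∫ s, ∫ x, F x s ∂ν ∂ρ := integral_integral_swap hF
    _ ≤ ∫ s, ‖charFun ν (T * s)‖ ∂ρ :=
        integral_mono_ae hF.integral_prod_right
          ((by fun_prop : Continuous fun s => ‖charFun ν (T * s)‖).integrableOn_Ioc) hinner
    _ = ∫ s in (-1 : ℝ)..1, ‖charFun ν (T * s)‖ :=
        (intervalIntegral.integral_of_le (by norm_num)).symm

lemma measureReal_abs_sub_le_le_integral_norm_charFun [IsFiniteMeasure ν] (a : ℝ) {T t : ℝ}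
    (hT : 0 ≤ T) (hTt : T * t ≤ 1) :
    ν.real {x | |x - a| ≤ t} ≤ 48 / 43 * ∫ s in (-1 : ℝ)..1, ‖charFun ν (T * s)‖ := by
  have hA : MeasurableSet {x : ℝ | |x - a| ≤ t} := measurableSet_le (by fun_prop) measurable_const
  have hK : Integrable (fun x => fejerKernel (T * (x - a))) ν :=
    .of_bound (continuous_fejerKernel.comp (by fun_prop)).aestronglyMeasurable 2
      (.of_forall fun x => abs_fejerKernel_le _)
  have hindicator (x : ℝ) :
      {x : ℝ | |x - a| ≤ t}.indicator 1 x ≤ 48 / 43 * fejerKernel (T * (x - a)) := by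
    by_cases hx : x ∈ {x : ℝ | |x - a| ≤ t}
    · have hr : |T * (x - a)| ≤ 1 := by
        rw [abs_mul, abs_of_nonneg hT]
        exact (mul_le_mul_of_nonneg_left hx hT).trans hTt
      rw [Set.indicator_of_mem hx, Pi.one_apply]
      linarith [le_fejerKernel hr]
    · rw [Set.indicator_of_notMem hx]
      have := fejerKernel_nonneg (T * (x - a))
      positivity
  calc ν.real {x | |x - a| ≤ t} = ∫ x, {x : ℝ | |x - a| ≤ t}.indicator 1 x ∂ν :=
        (integral_indicator_one hA).symm
    _ ≤ ∫ x, 48 / 43 * fejerKernel (T * (x - a)) ∂ν :=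
        integral_mono ((integrable_const 1).indicator hA) (hK.const_mul _) hindicator
    _ ≤ 48 / 43 * ∫ s in (-1 : ℝ)..1, ‖charFun ν (T * s)‖ := by
        rw [MeasureTheory.integral_const_mul]
        gcongr
        exact integral_fejerKernel_le_integral_norm_charFun ν a T

lemma measureReal_abs_sub_le_le_of_norm_charFun_le [IsFiniteMeasure ν] (a : ℝ) {T t b : ℝ}
    (hT : 0 < T) (hTt : T * t ≤ 1) (hb : 0 < b)
    (hdecay : ∀ u, |u| ≤ T → ‖charFun ν u‖ ≤ Real.exp (-b * u ^ 2)) :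
    ν.real {x | |x - a| ≤ t} ≤ 48 / 43 * √(Real.pi / (b * T ^ 2)) := by
  have hgauss := integrable_exp_neg_mul_sq (b := b * T ^ 2) (by positivity)
  refine (measureReal_abs_sub_le_le_integral_norm_charFun ν a hT.le hTt).trans ?_
  gcongr
  calc ∫ s in (-1 : ℝ)..1, ‖charFun ν (T * s)‖
      ≤ ∫ s in (-1 : ℝ)..1, Real.exp (-(b * T ^ 2) * s ^ 2) := by
        refine intervalIntegral.integral_mono_on (by norm_num)
          ((by fun_prop : Continuous fun s => ‖charFun ν (T * s)‖).intervalIntegrable _ _)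
          hgauss.intervalIntegrable fun s hs => ?_
        have hs : |T * s| ≤ T := by
          rw [abs_mul, abs_of_pos hT]
          exact mul_le_of_le_one_right hT.le (abs_le.2 hs)
        convert hdecay _ hs using 2
        ring
    _ ≤ ∫ s, Real.exp (-(b * T ^ 2) * s ^ 2) := by
        rw [intervalIntegral.integral_of_le (by norm_num)]
        exact setIntegral_le_integral hgauss (.of_forall fun s => (Real.exp_pos _).le)
    _ = √(Real.pi / (b * T ^ 2)) := integral_gaussian _

end Esseen

/-- anti-concentration, Lévy concentration function bound: for every
`M > 0` there is `C = C(M) > 0` such that for independent centered real random variables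
`ξ_1, …, ξ_m` with `𝔼|ξ_i|³ ≤ M (𝔼ξ_i²)^{3/2}` and `Σ 𝔼ξ_i² > 0`, the sum
`S = ξ_1 + ⋯ + ξ_m` satisfies, for every `t ≥ (1/8) max_i √(𝔼ξ_i²)`,
`Q_S(t) = sup_a P(|S - a| ≤ t) ≤ C t / √(Σ 𝔼ξ_i²)`. -/
theorem stmt_18 (M : ℝ) (hM : 0 < M) :
    ∃ C : ℝ, 0 < C ∧
      ∀ (Ω : Type) (_ : MeasurableSpace Ω) (μ : Measure Ω), IsProbabilityMeasure μ →
        ∀ (m : ℕ) (ξ : Fin m → Ω → ℝ),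
          (∀ i, Measurable (ξ i)) →
          iIndepFun ξ μ →
          (∀ i, Integrable (fun ω => |ξ i ω| ^ 3) μ) →
          (∀ i, (∫ ω, ξ i ω ∂μ) = 0) →
          (∀ i, (∫ ω, |ξ i ω| ^ 3 ∂μ) ≤ M * (∫ ω, (ξ i ω) ^ 2 ∂μ) ^ ((3 : ℝ) / 2)) →
          (0 < ∑ i, ∫ ω, (ξ i ω) ^ 2 ∂μ) →
          ∀ t : ℝ,
            (1 / 8) * (⨆ i, Real.sqrt (∫ ω, (ξ i ω) ^ 2 ∂μ)) ≤ t →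
            (⨆ a : ℝ, (μ {ω | |(∑ i, ξ i ω) - a| ≤ t}).toReal)
              ≤ C * t / Real.sqrt (∑ i, ∫ ω, (ξ i ω) ^ 2 ∂μ) := by
  refine ⟨3072 / 43 * √Real.pi * (M + 1), by positivity, ?_⟩
  intro Ω _ μ _ m ξ hmeas hind hint3 hmean hmom hV t ht
  set σ2 : Fin m → ℝ := fun i => ∫ ω, ξ i ω ^ 2 ∂μ
  set V := ∑ i, σ2 i
  have hσ (i : Fin m) : √(σ2 i) ≤ 8 * t := by
    linarith [le_ciSup (Finite.bddAbove_range fun j => √(σ2 j)) i]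
  have ht0 : 0 < t := by
    obtain ⟨i, -, hi⟩ := Finset.exists_lt_of_sum_lt (by simpa using hV : ∑ i, (0 : ℝ) < V)
    linarith [hσ i, Real.sqrt_pos.2 hi]
  set T := 1 / (32 * (M + 1) * t)
  have hdecay (u : ℝ) (hu : |u| ≤ T) :
      ‖charFun (μ.map fun ω => ∑ i, ξ i ω) u‖ ≤ Real.exp (-(V / 4) * u ^ 2) := by
    have hσu (i : Fin m) : √(σ2 i) * |u| ≤ 1 / (4 * (M + 1)) :=
      calc √(σ2 i) * |u| ≤ 8 * t * T := mul_le_mul (hσ i) hu (abs_nonneg u) (by positivity)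
        _ = 1 / (4 * (M + 1)) := by simp only [T]; field_simp; ring
    convert norm_charFun_map_sum_le_exp hmeas hind hint3 hmean hmom
      (fun i => (hσu i).trans (by rw [div_le_one (by positivity)]; linarith))
      (fun i => ?_) using 2
    · ring
    calc M * √(σ2 i) * |u| ≤ M * (1 / (4 * (M + 1))) := by rw [mul_assoc]; gcongr; exact hσu i
      _ ≤ 1 / 4 := by rw [mul_one_div, div_le_iff₀ (by positivity)]; linarith
  refine ciSup_le fun a => ?_
  calc (μ {ω | |(∑ i, ξ i ω) - a| ≤ t}).toReal
      = (μ.map fun ω => ∑ i, ξ i ω).real {x | |x - a| ≤ t} := by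
        rw [map_measureReal_apply (by fun_prop) (measurableSet_le (by fun_prop) measurable_const)]
        rfl
    _ ≤ 48 / 43 * √(Real.pi / (V / 4 * T ^ 2)) :=
        measureReal_abs_sub_le_le_of_norm_charFun_le _ a (by positivity)
          (by simp only [T]; field_simp; linarith) (by positivity) hdecay
    _ = 3072 / 43 * √Real.pi * (M + 1) * t / √V := by
        rw [show Real.pi / (V / 4 * T ^ 2) = (64 * (M + 1) * t) ^ 2 * Real.pi / V by
            simp only [T]; field_simp; ring,
          Real.sqrt_div' _ hV.le, Real.sqrt_mul' _ Real.pi_pos.le, Real.sqrt_sq (by positivity)]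
        ring
end

section
/- Let z ∈ [η, 2-η] for some η > 0 and n ≥ 2. Let k₀ = ⌊z²n/4⌋ and α_k = (z_k + √(z_k²-4))/2 with z_k = z√(n/k). Then D_n(z) := Σ_{k=1}^{k₀} log α_k satisfies D_n(z) = z²n/4 - (1/4)·log n + O(1), where the O(1) is uniform over z ∈ [η, 2-η]. -/
/-
Writing `N = z²n/4`, the larger root of `x² - z_k x + 1` is `α_k = √(N/k) · (1 + √(1 - k/N))`,
so the sum splits into `(1/2) Σ_{k ≤ N} log (N/k) = (⌊N⌋ log N - log ⌊N⌋!)/2` and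
`Σ_{k ≤ N} φ(k/N)` with `φ t = log (1 + √(1 - t))`. Stirling's formula gives
`N/2 - (log N)/4 + O(1)` for the first part.
The function `φ` is antitone with values in `[0, log 2]` and `∫₀¹ φ = 1/2`, so the second sum is
`N ∫₀¹ φ + O(1) = N/2 + O(1)`. Finally `log N = log n + log (z²/4)`, and `log (z²/4)` is bounded
for `z ∈ [η, 2 - η]`; when `N < 1` the sum is empty and `n < 4/η²`.
-/

open Real Finset
open scoped Nat

theorem Finset.sum_Icc_one_eq_sum_range {M : Type*} [AddCommMonoid M] (g : ℕ → M) (K : ℕ) :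
    ∑ k ∈ Icc 1 K, g k = ∑ i ∈ range K, g (i + 1) := by
  rw [range_eq_Ico, sum_Ico_add', zero_add, Ico_add_one_right_eq_Icc]

section SumIntegral

variable {f : ℝ → ℝ} {N : ℝ}

theorem AntitoneOn.sum_Icc_floor_le_integral (hN : 0 ≤ N) (hf : AntitoneOn f (Set.Icc 0 N))
    (hf0 : ∀ x ∈ Set.Icc 0 N, 0 ≤ f x) :
    ∑ k ∈ Icc 1 ⌊N⌋₊, f k ≤ ∫ x in 0..N, f x := by
  have hKN : (⌊N⌋₊ : ℝ) ≤ N := Nat.floor_le hN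
  have hsum := (hf.mono (Set.Icc_subset_Icc_right (by simpa using hKN))).sum_le_integral
  simp only [zero_add, Nat.cast_add, Nat.cast_one] at hsum
  rw [sum_Icc_one_eq_sum_range (fun k : ℕ => f k)]
  push_cast
  refine hsum.trans (intervalIntegral.integral_mono_interval le_rfl (Nat.cast_nonneg _) hKN ?_
    ((hf.mono ?_).intervalIntegrable))
  · exact MeasureTheory.ae_restrict_of_forall_mem measurableSet_Ioc fun x hx =>
      hf0 x (Set.Ioc_subset_Icc_self hx)
  · exact (Set.uIcc_of_le hN).subset

theorem AntitoneOn.integral_le_sum_Icc_floor_add (hN : 0 ≤ N) (hf : AntitoneOn f (Set.Icc 0 N))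
    (hf0 : ∀ x ∈ Set.Icc 0 N, 0 ≤ f x) :
    ∫ x in 0..N, f x ≤ ∑ k ∈ Icc 1 ⌊N⌋₊, f k + 2 * f 0 := by
  set K := ⌊N⌋₊
  have hK0 : (0 : ℝ) ≤ K := Nat.cast_nonneg K
  have hKN : (K : ℝ) ≤ N := Nat.floor_le hN
  have hNK : N < K + 1 := Nat.lt_floor_add_one N
  have hint : ∀ a b, a ∈ Set.Icc 0 N → b ∈ Set.Icc 0 N →
      IntervalIntegrable f MeasureTheory.volume a b :=
    fun a b ha hb => (hf.mono (Set.uIcc_subset_Icc ha hb)).intervalIntegrable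
  have hleft : ∫ x in 0..(K : ℝ), f x ≤ ∑ k ∈ Icc 1 K, f k + f 0 := by
    have := (hf.mono (Set.Icc_subset_Icc_right (by simpa using hKN))).integral_le_sum
    simp only [zero_add] at this
    refine this.trans ?_
    rw [sum_Icc_one_eq_sum_range (fun k : ℕ => f k)]
    have hfK : 0 ≤ f K := hf0 K ⟨hK0, hKN⟩
    have := sum_range_succ' (fun i : ℕ => f i) K
    rw [sum_range_succ] at this
    push_cast at this ⊢
    linarith
  have hright : ∫ x in (K : ℝ)..N, f x ≤ f 0 := by
    calc ∫ x in (K : ℝ)..N, f x ≤ ∫ x in (K : ℝ)..N, f K :=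
          intervalIntegral.integral_mono_on hKN (hint _ _ ⟨hK0, hKN⟩ ⟨hN, le_rfl⟩)
            intervalIntegrable_const fun x hx => hf ⟨hK0, hKN⟩ ⟨hK0.trans hx.1, hx.2⟩ hx.1
      _ = (N - K) * f K := by simp
      _ ≤ 1 * f 0 := mul_le_mul (by linarith) (hf ⟨le_rfl, hN⟩ ⟨hK0, hKN⟩ hK0)
            (hf0 _ ⟨hK0, hKN⟩) zero_le_one
      _ = f 0 := one_mul _
  rw [← intervalIntegral.integral_add_adjacent_intervals
    (hint 0 K ⟨le_rfl, hN⟩ ⟨hK0, hKN⟩) (hint K N ⟨hK0, hKN⟩ ⟨hN, le_rfl⟩)]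
  linarith

end SumIntegral

theorem Stirling.log_factorial_le_stirling_add_one {n : ℕ} (hn : n ≠ 0) :
    log n ! ≤ n * log n - n + log n / 2 + 1 := by
  have hn0 : (0 : ℝ) < n := by positivity
  have hseq : stirlingSeq n ≤ exp 1 / √2 := by
    obtain ⟨m, rfl⟩ := Nat.exists_eq_succ_of_ne_zero hn
    simpa using stirlingSeq'_antitone (Nat.zero_le m)
  have hlog_seq : log (stirlingSeq n) ≤ 1 - log 2 / 2 := by
    calc log (stirlingSeq n) ≤ log (exp 1 / √2) :=
          log_le_log (by unfold stirlingSeq; positivity) hseq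
      _ = 1 - log 2 / 2 := by
        rw [log_div (exp_ne_zero 1) (by positivity), log_exp, log_sqrt zero_le_two]
  have := log_stirlingSeq_formula n
  rw [log_mul two_ne_zero hn0.ne', log_div hn0.ne' (exp_ne_zero 1), log_exp] at this
  linarith

theorem sum_Icc_log_eq_log_factorial (K : ℕ) : ∑ k ∈ Icc 1 K, log k = log K ! := by
  rw [← Finset.Ico_add_one_right_eq_Icc, ← Finset.prod_Ico_id_eq_factorial, Nat.cast_prod,
    log_prod fun k hk => by have := (Finset.mem_Ico.mp hk).1; positivity]

theorem abs_sum_Icc_floor_log_div_sub_le {N : ℝ} (hN : 1 ≤ N) :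
    |∑ k ∈ Icc 1 ⌊N⌋₊, log (N / k) / 2 - N / 2 + log N / 4| ≤ 1 := by
  set K := ⌊N⌋₊
  have hK : 1 ≤ K := Nat.le_floor (by exact_mod_cast hN)
  have hK1 : (1 : ℝ) ≤ K := by exact_mod_cast hK
  have hK0 : (0 : ℝ) < K := by linarith
  have hN0 : 0 < N := by linarith
  have hKN : (K : ℝ) ≤ N := Nat.floor_le (by linarith)
  have hNK : N < K + 1 := Nat.lt_floor_add_one N
  have hsum : ∑ k ∈ Icc 1 K, log (N / k) / 2 = (K * log N - log K !) / 2 := by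
    have hlog_div : ∀ k ∈ Icc 1 K, log (N / k) = log N - log k := fun k hk =>
      log_div hN0.ne' (by have := (Finset.mem_Icc.mp hk).1; positivity)
    rw [← sum_Icc_log_eq_log_factorial, ← Finset.sum_div, Finset.sum_congr rfl hlog_div,
      Finset.sum_sub_distrib, Finset.sum_const, Nat.card_Icc, nsmul_eq_mul, Nat.add_sub_cancel]
  have hdiff_nonneg : 0 ≤ log N - log K := sub_nonneg.mpr (log_le_log hK0 hKN)
  have hdiff_le : log N - log K ≤ log 2 := by
    rw [← log_div hN0.ne' hK0.ne']
    exact log_le_log (by positivity) ((div_le_iff₀ hK0).mpr (by linarith))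
  have hKdiff : K * (log N - log K) ≤ N - K := by
    have := log_le_sub_one_of_pos (div_pos hN0 hK0)
    rw [log_div hN0.ne' hK0.ne'] at this
    calc K * (log N - log K) ≤ K * (N / K - 1) := by gcongr
      _ = N - K := by field_simp
  have hlow := Stirling.le_log_factorial_stirling (n := K) (by omega)
  have hup := Stirling.log_factorial_le_stirling_add_one (n := K) (by omega)
  have hlog2 : log 2 ≤ 1 := by linarith [log_le_sub_one_of_pos (zero_lt_two (α := ℝ))]
  have hlog2pi : 0 ≤ log (2 * π) := log_nonneg (by linarith [pi_gt_three])
  rw [hsum, abs_le]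
  constructor <;> nlinarith

namespace LargerRoot

noncomputable def logOneAddSqrt (t : ℝ) : ℝ := log (1 + √(1 - t))

noncomputable def logOneAddSqrtPrimitive (t : ℝ) : ℝ :=
  t * logOneAddSqrt t + (1 - t) / 2 - √(1 - t)

theorem logOneAddSqrt_nonneg (t : ℝ) : 0 ≤ logOneAddSqrt t :=
  log_nonneg (by linarith [sqrt_nonneg (1 - t)])

theorem antitone_logOneAddSqrt : Antitone logOneAddSqrt := fun s t hst =>
  log_le_log (by positivity) (by gcongr)

theorem continuous_logOneAddSqrt : Continuous logOneAddSqrt :=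
  (continuous_const.add (continuous_const.sub continuous_id).sqrt).log fun _ =>
    (add_pos_of_pos_of_nonneg one_pos (sqrt_nonneg _)).ne'

theorem hasDerivAt_logOneAddSqrtPrimitive {t : ℝ} (ht : t < 1) :
    HasDerivAt logOneAddSqrtPrimitive (logOneAddSqrt t) t := by
  have hu : 0 < 1 - t := by linarith
  have hsq : HasDerivAt (fun x => √(1 - x)) (-1 / (2 * √(1 - t))) t := by
    simpa using ((hasDerivAt_id t).const_sub 1).sqrt hu.ne'
  have hlog : HasDerivAt logOneAddSqrt (-1 / (2 * √(1 - t)) / (1 + √(1 - t))) t :=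
    (hsq.const_add 1).log (by positivity)
  have hprim := (((hasDerivAt_id' t).mul hlog).add
    (((hasDerivAt_id' t).const_sub 1).div_const 2)).sub hsq
  refine hprim.congr_deriv ?_
  have ht' : t = 1 - √(1 - t) ^ 2 := by rw [sq_sqrt hu.le]; ring
  have hs0 : 0 < √(1 - t) := sqrt_pos.mpr hu
  -- in terms of `s = √(1 - t)` the identity is rational
  generalize √(1 - t) = s at ht' hs0
  subst ht'
  field_simp
  ring

theorem integral_logOneAddSqrt : ∫ t in (0 : ℝ)..1, logOneAddSqrt t = 1 / 2 := by
  rw [intervalIntegral.integral_eq_sub_of_hasDerivAt_of_le zero_le_one ?_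
    (fun t ht => hasDerivAt_logOneAddSqrtPrimitive ht.2)
    (continuous_logOneAddSqrt.intervalIntegrable 0 1)]
  · norm_num [logOneAddSqrtPrimitive, logOneAddSqrt]
  · exact ((continuous_id.mul continuous_logOneAddSqrt).add
      ((continuous_const.sub continuous_id).div_const 2)).sub
      (continuous_const.sub continuous_id).sqrt |>.continuousOn

theorem integral_logOneAddSqrt_div {N : ℝ} (hN : 0 < N) :
    ∫ x in (0 : ℝ)..N, logOneAddSqrt (x / N) = N / 2 := by
  rw [intervalIntegral.integral_comp_div _ hN.ne', zero_div, div_self hN.ne',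
    integral_logOneAddSqrt, smul_eq_mul, mul_one_div]

theorem sum_Icc_floor_logOneAddSqrt_bounds {N : ℝ} (hN : 0 < N) :
    N / 2 - 2 * log 2 ≤ ∑ k ∈ Icc 1 ⌊N⌋₊, logOneAddSqrt (k / N) ∧
      ∑ k ∈ Icc 1 ⌊N⌋₊, logOneAddSqrt (k / N) ≤ N / 2 := by
  have hanti : AntitoneOn (fun x => logOneAddSqrt (x / N)) (Set.Icc 0 N) :=
    fun x _ y _ hxy => antitone_logOneAddSqrt (div_le_div_of_nonneg_right hxy hN.le)
  have hnonneg : ∀ x ∈ Set.Icc 0 N, 0 ≤ logOneAddSqrt (x / N) :=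
    fun x _ => logOneAddSqrt_nonneg _
  have hlow := AntitoneOn.integral_le_sum_Icc_floor_add hN.le hanti hnonneg
  have hup := AntitoneOn.sum_Icc_floor_le_integral hN.le hanti hnonneg
  have hzero : logOneAddSqrt (0 / N) = log 2 := by
    simp [logOneAddSqrt, one_add_one_eq_two]
  rw [integral_logOneAddSqrt_div hN] at hlow hup
  rw [hzero] at hlow
  exact ⟨by linarith, hup⟩

theorem abs_sum_Icc_floor_log_div_add_logOneAddSqrt_sub_le {N : ℝ} (hN : 1 ≤ N) :
    |∑ k ∈ Icc 1 ⌊N⌋₊, (log (N / k) / 2 + logOneAddSqrt (k / N)) - N + log N / 4|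
      ≤ 3 := by
  have hlog := abs_sum_Icc_floor_log_div_sub_le hN
  obtain ⟨hlow, hup⟩ := sum_Icc_floor_logOneAddSqrt_bounds (N := N) (by linarith)
  have hlog2 : log 2 ≤ 1 := by linarith [log_le_sub_one_of_pos (zero_lt_two (α := ℝ))]
  rw [sum_add_distrib]
  rw [abs_le] at hlog ⊢
  constructor <;> linarith

theorem larger_root_eq {w : ℝ} (hw : 0 < w) :
    (w + √(w ^ 2 - 4)) / 2 = w / 2 * (1 + √(1 - 4 / w ^ 2)) := by
  have : w ^ 2 - 4 = w ^ 2 * (1 - 4 / w ^ 2) := by field_simp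
  rw [this, sqrt_mul (sq_nonneg w), sqrt_sq hw.le]
  ring

theorem log_larger_root_eq {z : ℝ} {n k : ℕ} (hz : 0 < z) (hn : n ≠ 0) (hk : k ≠ 0) :
    log ((z * √(n / k) + √((z * √(n / k)) ^ 2 - 4)) / 2)
      = log (z ^ 2 * n / 4 / k) / 2 + logOneAddSqrt (k / (z ^ 2 * n / 4)) := by
  have hn0 : (0 : ℝ) < n := by positivity
  have hk0 : (0 : ℝ) < k := by positivity
  have hw : 0 < z * √(n / k) := by positivity
  have hw2 : (z * √(n / k)) ^ 2 = z ^ 2 * n / k := by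
    rw [mul_pow, sq_sqrt (by positivity)]; ring
  have hhalf : z * √(n / k) / 2 = √(z ^ 2 * n / 4 / k) := by
    rw [← sqrt_sq (by positivity : 0 ≤ z * √(n / k) / 2), div_pow, hw2]
    congr 1; ring
  rw [larger_root_eq hw, log_mul (by positivity) (by positivity), hhalf, log_sqrt (by positivity),
    hw2, logOneAddSqrt]
  congr 4
  field_simp

theorem abs_sum_log_larger_root_sub_le {z : ℝ} {n : ℕ} (hz : 0 < z) (hn : n ≠ 0)
    (hN : 1 ≤ z ^ 2 * n / 4) :
    |∑ k ∈ Icc 1 ⌊z ^ 2 * n / 4⌋₊,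
        log ((z * √(n / k) + √((z * √(n / k)) ^ 2 - 4)) / 2)
      - z ^ 2 * n / 4 + log (z ^ 2 * n / 4) / 4| ≤ 3 := by
  rw [sum_congr rfl fun k hk =>
    log_larger_root_eq hz hn (by have := (mem_Icc.mp hk).1; omega)]
  exact abs_sum_Icc_floor_log_div_add_logOneAddSqrt_sub_le hN

end LargerRoot

/-- for fixed `η ∈ (0,1)` there is `C = C(η)` such that for all `n ≥ 2`
and `z ∈ [η, 2-η]`, with `k₀ = ⌊z²n/4⌋`, `z_k = z√(n/k)` and
`α_k = (z_k + √(z_k² - 4))/2`, one has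
`|Σ_{k=1}^{k₀} log α_k - z²n/4 + (log n)/4| ≤ C`. -/
theorem stmt_19 (η : ℝ) (hη : η ∈ Set.Ioo (0 : ℝ) 1) :
    ∃ C : ℝ, 0 < C ∧
      ∀ (n : ℕ), 2 ≤ n → ∀ z ∈ Set.Icc η (2 - η),
        |(∑ k ∈ Finset.Icc 1 (Nat.floor (z ^ 2 * n / 4)),
            Real.log ((z * Real.sqrt (n / k)
              + Real.sqrt ((z * Real.sqrt (n / k)) ^ 2 - 4)) / 2))
          - z ^ 2 * n / 4 + Real.log n / 4| ≤ C := by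
  obtain ⟨hη0, hη1⟩ := hη
  have hlogη : 0 < log (4 / η ^ 2) := log_pos (by rw [lt_div_iff₀ (by positivity)]; nlinarith)
  refine ⟨3 + log (4 / η ^ 2) / 4, by positivity, fun n hn z ⟨hηz, hz2⟩ => ?_⟩
  have hz0 : 0 < z := hη0.trans_le hηz
  have hn1 : (1 : ℝ) ≤ n := by exact_mod_cast (by omega : 1 ≤ n)
  have hlogn_nonneg := log_nonneg hn1
  rcases lt_or_ge (z ^ 2 * n / 4) 1 with hN | hN
  · rw [Nat.floor_eq_zero.mpr hN, Icc_eq_empty (by norm_num), sum_empty]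
    have hηN : η ^ 2 * n / 4 ≤ z ^ 2 * n / 4 := by gcongr
    have hlogn : log n ≤ log (4 / η ^ 2) :=
      log_le_log (by positivity) (by rw [le_div_iff₀ (by positivity)]; linarith)
    have : 0 ≤ z ^ 2 * n / 4 := by positivity
    rw [abs_le]
    constructor <;> linarith
  · have hlogn : log n = log (z ^ 2 * n / 4) + log (4 / z ^ 2) := by
      rw [← log_mul (by positivity) (by positivity)]
      congr 1
      field_simp
    have hlogz : 0 ≤ log (4 / z ^ 2) :=
      log_nonneg (by rw [le_div_iff₀ (by positivity)]; nlinarith)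
    have hlogzη : log (4 / z ^ 2) ≤ log (4 / η ^ 2) := log_le_log (by positivity) (by gcongr)
    have hmain := LargerRoot.abs_sum_log_larger_root_sub_le hz0 (by omega) hN
    rw [abs_le] at hmain ⊢
    constructor <;> linarith
end
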